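/- arXiv:1209.6315 — 8 statements merged into one kernel-verified Lean document; each statement's English description precedes it below -/
import Mathlib

section
/- Let E be a finite-dimensional real normed vector space, L_d : E × E → ℝ continuously differentiable, N ≥ 2 an integer, and fix endpoints q₀, q_N ∈ E. Define the discrete action A_d : E^{N-1} → ℝ by A_d(q₁, …, q_{N-1}) = Σ_{k=1}^{N} L_d(q_{k-1}, q_k). Then (q₁, …, q_{N-1}) is a critical point of A_d (its Fréchet derivative vanishes) if and only if the discrete Euler–Lagrange equations hold: D₁L_d(q_k, q_{k+1}) + D₂L_d(q_{k-1}, q_k) = 0 in E* for every k = 1, …, N−1. -/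
/-!
The derivative of the action in the direction of a variation `v` of the interior points is
`∑ₖ D₁L(qₖ, qₖ₊₁) δqₖ + D₂L(qₖ, qₖ₊₁) δqₖ₊₁`, where `δq` is `v` padded by zeros at both
endpoints. Shifting the index in the second sum and dropping the boundary terms, which vanish
because the endpoints are fixed, turns it into `∑ᵢ (D₁L(qᵢ, qᵢ₊₁) + D₂L(qᵢ₋₁, qᵢ)) (vᵢ)`, a sum
of functionals of independent coordinates. Such a sum vanishes iff every summand does.
-/

open scoped BigOperators

/-- The discrete path determined by interior points `p : Fin (N-1) → E` and fixed
endpoints `a = q₀`, `b = q_N`. -/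
def discretePath {E : Type*} (N : ℕ) (a b : E) (p : Fin (N - 1) → E) (k : ℕ) : E :=
  if h : 1 ≤ k ∧ k ≤ N - 1 then p ⟨k - 1, by omega⟩
  else if k = 0 then a else b

open ContinuousLinearMap Finset

theorem Finset.sum_range_succ_add_shift {M : Type*} [AddCommMonoid M] {n : ℕ} {f g : ℕ → M}
    (hf : f 0 = 0) (hg : g n = 0) :
    ∑ k ∈ range (n + 1), (f k + g k) = ∑ i ∈ range n, (f (i + 1) + g i) := by
  rw [sum_add_distrib, sum_range_succ', sum_range_succ, hf, hg, add_zero, add_zero,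
    ← sum_add_distrib]

section Pi

variable {R ι M M₂ : Type*} [Semiring R] [Fintype ι] [DecidableEq ι]
  [TopologicalSpace M] [AddCommMonoid M] [Module R M]
  [TopologicalSpace M₂] [AddCommMonoid M₂] [Module R M₂] [ContinuousAdd M₂]

theorem ContinuousLinearMap.sum_comp_proj_comp_single (φ : ι → M →L[R] M₂) (i : ι) :
    (∑ j, (φ j).comp (proj j)).comp (single R (fun _ => M) i) = φ i := by
  ext x
  simp [Pi.single_apply, apply_ite]

theorem ContinuousLinearMap.sum_comp_proj_eq_zero_iff (φ : ι → M →L[R] M₂) :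
    ∑ i, (φ i).comp (proj i) = 0 ↔ ∀ i, φ i = 0 := by
  refine ⟨fun h i => ?_, fun h => by simp [h]⟩
  rw [← sum_comp_proj_comp_single φ i, h, zero_comp]

end Pi

section PartialDerivatives

variable {𝕜 X E F G : Type*} [NontriviallyNormedField 𝕜]
  [NormedAddCommGroup X] [NormedSpace 𝕜 X] [NormedAddCommGroup E] [NormedSpace 𝕜 E]
  [NormedAddCommGroup F] [NormedSpace 𝕜 F] [NormedAddCommGroup G] [NormedSpace 𝕜 G]
  {L : E × F → G}

theorem fderiv_comp_prodMk_left {a : E} {b : F} (hL : DifferentiableAt 𝕜 L (a, b)) :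
    fderiv 𝕜 (fun x => L (x, b)) a = (fderiv 𝕜 L (a, b)).comp (inl 𝕜 E F) :=
  (hL.hasFDerivAt.comp a (hasFDerivAt_prodMk_left a b)).fderiv

theorem fderiv_comp_prodMk_right {a : E} {b : F} (hL : DifferentiableAt 𝕜 L (a, b)) :
    fderiv 𝕜 (fun y => L (a, y)) b = (fderiv 𝕜 L (a, b)).comp (inr 𝕜 E F) :=
  (hL.hasFDerivAt.comp b (hasFDerivAt_prodMk_right a b)).fderiv

theorem HasFDerivAt.comp_prodMk_of_partial {f : X → E} {g : X → F} {f' : X →L[𝕜] E}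
    {g' : X →L[𝕜] F} {x : X} (hL : DifferentiableAt 𝕜 L (f x, g x))
    (hf : HasFDerivAt f f' x) (hg : HasFDerivAt g g' x) :
    HasFDerivAt (fun y => L (f y, g y))
      ((fderiv 𝕜 (fun e => L (e, g x)) (f x)).comp f'
        + (fderiv 𝕜 (fun e => L (f x, e)) (g x)).comp g') x := by
  refine (hL.hasFDerivAt.comp x (hf.prodMk hg)).congr_fderiv ?_
  ext v
  rw [fderiv_comp_prodMk_left hL, fderiv_comp_prodMk_right hL]
  exact (comp_inl_add_comp_inr _ _).symm

end PartialDerivatives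

section DiscreteMechanics

variable {E : Type*} [NormedAddCommGroup E] [NormedSpace ℝ E]

variable (E) in
noncomputable def discretePathVariation (N k : ℕ) : (Fin (N - 1) → E) →L[ℝ] E :=
  if h : 1 ≤ k ∧ k ≤ N - 1 then proj ⟨k - 1, by omega⟩ else 0

theorem hasFDerivAt_discretePath (N : ℕ) (a b : E) (k : ℕ) (p : Fin (N - 1) → E) :
    HasFDerivAt (fun p => discretePath N a b p k) (discretePathVariation E N k) p := by
  unfold discretePath discretePathVariation
  split_ifs
  · exact hasFDerivAt_apply _ p
  · exact hasFDerivAt_const _ _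
  · exact hasFDerivAt_const _ _

theorem discretePathVariation_zero (N : ℕ) : discretePathVariation E N 0 = 0 :=
  dif_neg (by omega)

theorem discretePathVariation_of_lt {N k : ℕ} (hk : N - 1 < k) :
    discretePathVariation E N k = 0 :=
  dif_neg (by omega)

theorem discretePathVariation_succ {N : ℕ} (i : Fin (N - 1)) :
    discretePathVariation E N (i + 1) = proj i :=
  dif_pos (by omega)

def discreteAction (L : E × E → ℝ) (N : ℕ) (a b : E) (p : Fin (N - 1) → E) : ℝ :=
  ∑ k ∈ range N, L (discretePath N a b p k, discretePath N a b p (k + 1))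

noncomputable def discreteEulerLagrange (L : E × E → ℝ) (N : ℕ) (a b : E)
    (q : Fin (N - 1) → E) (k : ℕ) : E →L[ℝ] ℝ :=
  fderiv ℝ (fun x => L (x, discretePath N a b q (k + 1))) (discretePath N a b q k)
    + fderiv ℝ (fun y => L (discretePath N a b q (k - 1), y)) (discretePath N a b q k)

theorem hasFDerivAt_discreteAction {L : E × E → ℝ} (hL : Differentiable ℝ L) {N : ℕ}
    (hN : 1 ≤ N) (a b : E) (q : Fin (N - 1) → E) :
    HasFDerivAt (discreteAction L N a b)
      (∑ i : Fin (N - 1), (discreteEulerLagrange L N a b q (i + 1)).comp (proj i)) q := by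
  set x := discretePath N a b q
  set δ := discretePathVariation E N
  have hsum : HasFDerivAt (discreteAction L N a b)
      (∑ k ∈ range N, ((fderiv ℝ (fun e => L (e, x (k + 1))) (x k)).comp (δ k)
        + (fderiv ℝ (fun e => L (x k, e)) (x (k + 1))).comp (δ (k + 1)))) q :=
    HasFDerivAt.fun_sum fun k _ => .comp_prodMk_of_partial (hL _)
      (hasFDerivAt_discretePath N a b k q) (hasFDerivAt_discretePath N a b (k + 1) q)
  refine hsum.congr_fderiv ?_
  symm
  rw [show range N = range (N - 1 + 1) by congr; omega,
    sum_range_succ_add_shift (by simp [δ, discretePathVariation_zero])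
      (by simp [δ, discretePathVariation_of_lt (show N - 1 < N - 1 + 1 by omega)]),
    ← Fin.sum_univ_eq_sum_range]
  refine sum_congr rfl fun i _ => ?_
  simp [δ, discretePathVariation_succ, discreteEulerLagrange, x, add_comp]

end DiscreteMechanics

theorem discrete_euler_lagrange_iff_critical_general
    {E : Type*} [NormedAddCommGroup E] [NormedSpace ℝ E]
    (L : E × E → ℝ) (hL : ContDiff ℝ 1 L)
    (N : ℕ) (hN : 2 ≤ N) (q₀ qN : E) (q : Fin (N - 1) → E) :
    fderiv ℝ
        (fun p : Fin (N - 1) → E =>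
          ∑ k ∈ Finset.range N,
            L (discretePath N q₀ qN p k, discretePath N q₀ qN p (k + 1))) q = 0
      ↔ ∀ k : ℕ, 1 ≤ k → k ≤ N - 1 →
          fderiv ℝ (fun x => L (x, discretePath N q₀ qN q (k + 1)))
              (discretePath N q₀ qN q k)
            + fderiv ℝ (fun y => L (discretePath N q₀ qN q (k - 1), y))
              (discretePath N q₀ qN q k) = 0 := by
  have hA := hasFDerivAt_discreteAction (hL.differentiable one_ne_zero) (by omega) q₀ qN q
  change fderiv ℝ (discreteAction L N q₀ qN) q = 0 ↔
    ∀ k, 1 ≤ k → k ≤ N - 1 → discreteEulerLagrange L N q₀ qN q k = 0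
  rw [hA.fderiv, sum_comp_proj_eq_zero_iff]
  constructor
  · intro h k hk₁ hk₂
    simpa [Nat.sub_add_cancel hk₁] using h ⟨k - 1, by omega⟩
  · intro h i
    exact h (i + 1) (by omega) (by omega)

/-- **Discrete Euler–Lagrange equations.**  A configuration of interior points is a
critical point of the discrete action (with fixed endpoints) iff the discrete
Euler–Lagrange equations hold. -/
theorem discrete_euler_lagrange_iff_critical
    {E : Type*} [NormedAddCommGroup E] [NormedSpace ℝ E] [FiniteDimensional ℝ E]
    (L : E × E → ℝ) (hL : ContDiff ℝ 1 L)
    (N : ℕ) (hN : 2 ≤ N) (q₀ qN : E) (q : Fin (N - 1) → E) :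
    fderiv ℝ
        (fun p : Fin (N - 1) → E =>
          ∑ k ∈ Finset.range N,
            L (discretePath N q₀ qN p k, discretePath N q₀ qN p (k + 1))) q = 0
      ↔ ∀ k : ℕ, 1 ≤ k → k ≤ N - 1 →
          fderiv ℝ (fun x => L (x, discretePath N q₀ qN q (k + 1)))
              (discretePath N q₀ qN q k)
            + fderiv ℝ (fun y => L (discretePath N q₀ qN q (k - 1), y))
              (discretePath N q₀ qN q k) = 0 :=
  discrete_euler_lagrange_iff_critical_general L hL N hN q₀ qN q
end

section
/- Let E be a finite-dimensional real normed vector space, L_d : E × E → ℝ differentiable, and ξ : E → E a continuous linear endomorphism. Suppose L_d is invariant under the one-parameter group generated by ξ, i.e. L_d(exp(tξ)(q₀), exp(tξ)(q₁)) = L_d(q₀, q₁) for all t ∈ ℝ and all q₀, q₁ ∈ E, where exp denotes the exponential of continuous linear endomorphisms. Then for all q₀, q₁ ∈ E: D₁L_d(q₀, q₁)(ξ(q₀)) + D₂L_d(q₀, q₁)(ξ(q₁)) = 0; equivalently, the two discrete momentum maps J⁺(q₀,q₁) := D₂L_d(q₀,q₁)(ξ(q₁)) and J⁻(q₀,q₁)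 := −D₁L_d(q₀,q₁)(ξ(q₀)) coincide. -/
/-!
Differentiating the invariance `L (exp (tξ) q₀, exp (tξ) q₁) = L (q₀, q₁)` at `t = 0` shows that
`DL (q₀, q₁)` vanishes on the infinitesimal generator `(ξ q₀, ξ q₁)`; splitting `DL (q₀, q₁)` into
its two partial derivatives gives `D₁L (q₀, q₁) (ξ q₀) + D₂L (q₀, q₁) (ξ q₁) = 0`.
-/

open NormedSpace

theorem hasDerivAt_exp_smul_apply_zero {𝕂 E : Type*} [RCLike 𝕂] [NormedAddCommGroup E]
    [NormedSpace 𝕂 E] [CompleteSpace E] (A : E →L[𝕂] E) (q : E) :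
    HasDerivAt (fun t : 𝕂 => exp (t • A) q) (A q) 0 := by
  simpa using (hasDerivAt_exp_smul_const A 0).clm_apply (hasDerivAt_const 0 q)

theorem fderiv_apply_eq_zero_of_forall_comp_eq {𝕜 E F : Type*} [NontriviallyNormedField 𝕜]
    [NormedAddCommGroup E] [NormedSpace 𝕜 E] [NormedAddCommGroup F] [NormedSpace 𝕜 F]
    {L : E → F} {γ : 𝕜 → E} {p v : E} {t : 𝕜} (hγ : HasDerivAt γ v t) (hγt : γ t = p)
    (hL : DifferentiableAt 𝕜 L p) (hconst : ∀ s, L (γ s) = L p) :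
    fderiv 𝕜 L p v = 0 := by
  subst hγt
  have hcomp : HasDerivAt (fun s => L (γ s)) (fderiv 𝕜 L (γ t) v) t :=
    hL.hasFDerivAt.comp_hasDerivAt t hγ
  rw [funext hconst] at hcomp
  exact hcomp.unique (hasDerivAt_const t _)

theorem fderiv_partial_add_fderiv_partial {𝕜 E F G : Type*} [NontriviallyNormedField 𝕜]
    [NormedAddCommGroup E] [NormedSpace 𝕜 E] [NormedAddCommGroup F] [NormedSpace 𝕜 F]
    [NormedAddCommGroup G] [NormedSpace 𝕜 G] {L : E × F → G} {x : E} {y : F}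
    (hL : DifferentiableAt 𝕜 L (x, y)) (u : E) (v : F) :
    fderiv 𝕜 (fun x' => L (x', y)) x u + fderiv 𝕜 (fun y' => L (x, y')) y v
      = fderiv 𝕜 L (x, y) (u, v) := by
  have hleft : HasFDerivAt (fun x' => L (x', y))
      ((fderiv 𝕜 L (x, y)).comp (.inl 𝕜 E F)) x :=
    hL.hasFDerivAt.comp x (hasFDerivAt_prodMk_left x y)
  have hright : HasFDerivAt (fun y' => L (x, y'))
      ((fderiv 𝕜 L (x, y)).comp (.inr 𝕜 E F)) y :=
    hL.hasFDerivAt.comp y (hasFDerivAt_prodMk_right x y)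
  simp [hleft.fderiv, hright.fderiv, ← map_add]

/-- **Equality of discrete momentum maps (discrete Noether identity).**
If a differentiable discrete Lagrangian is invariant under the one-parameter
group `exp(tξ)` generated by a continuous linear endomorphism `ξ`, then
`D₁L_d(q₀,q₁)(ξ q₀) + D₂L_d(q₀,q₁)(ξ q₁) = 0`, i.e. the two discrete momentum
maps `J⁺` and `J⁻` coincide. -/
theorem discrete_momentum_maps_coincide
    {E : Type*} [NormedAddCommGroup E] [NormedSpace ℝ E] [FiniteDimensional ℝ E]
    (L : E × E → ℝ) (hL : Differentiable ℝ L)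
    (ξ : E →L[ℝ] E)
    (hinv : ∀ (t : ℝ) (q₀ q₁ : E),
      L (NormedSpace.exp (t • ξ) q₀, NormedSpace.exp (t • ξ) q₁) = L (q₀, q₁)) :
    ∀ q₀ q₁ : E,
      fderiv ℝ (fun x => L (x, q₁)) q₀ (ξ q₀)
        + fderiv ℝ (fun y => L (q₀, y)) q₁ (ξ q₁) = 0
      ∧ fderiv ℝ (fun y => L (q₀, y)) q₁ (ξ q₁)
        = -(fderiv ℝ (fun x => L (x, q₁)) q₀ (ξ q₀)) := by
  intro q₀ q₁
  have horbit : HasDerivAt (fun t : ℝ => (exp (t • ξ) q₀, exp (t • ξ) q₁)) (ξ q₀, ξ q₁) 0 :=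
    (hasDerivAt_exp_smul_apply_zero ξ q₀).prodMk (hasDerivAt_exp_smul_apply_zero ξ q₁)
  have hgenerator : fderiv ℝ L (q₀, q₁) (ξ q₀, ξ q₁) = 0 :=
    fderiv_apply_eq_zero_of_forall_comp_eq horbit (by simp) (hL _) (fun t => hinv t q₀ q₁)
  have hsum := (fderiv_partial_add_fderiv_partial (hL (q₀, q₁)) (ξ q₀) (ξ q₁)).trans hgenerator
  exact ⟨hsum, eq_neg_of_add_eq_zero_right hsum⟩
end

section
/- Let m, n, N ∈ ℕ with N ≥ 4, and let L_d : ℝ^m × ℝ^m × ℝ^m × Matrix(n,ℝ) × Matrix(n,ℝ) → ℝ be smooth on the open set where the two matrix arguments are invertible (a G-invariant discrete second-order Lagrangian, depending on the group only through W_k, W_{k+1}). Given q₀, …, q_N ∈ ℝ^m and invertible g₀, …, g_N ∈ Matrix(n,ℝ), set W_k = g_k⁻¹ g_{k+1} and A_d = Σ_{k=0}^{N-2} L_d(q_k, q_{k+1}, q_{k+2}, W_k, W_{k+1}). Then the following are equivalent. (a) For all δq₀, …, δq_N ∈ ℝ^m with δq₀ = δq₁ = δq_{N-1} = δq_N = 0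 and all Σ₀, …, Σ_N ∈ Matrix(n,ℝ) with Σ₀ = Σ₁ = Σ_{N-1} = Σ_N = 0, the derivative at ε = 0 of A_d along q_k(ε) = q_k + ε δq_k and W_k(ε) = exp(−ε Σ_k) W_k exp(ε Σ_{k+1}) vanishes. (b) The discrete second-order Lagrange–Poincaré equations hold for k = 2, …, N−2: D₁L_d|_k + D₂L_d|_{k-1} + D₃L_d|_{k-2} = 0 in (ℝ^m)*, and for every η ∈ Matrix(n,ℝ): D₄L_d|_{k-1}(W_{k-1} η) − D₄L_d|_k(η W_k) − D₅L_d|_{k-1}(η W_k) + D₅L_d|_{k-2}(W_{k-1} η) = 0, where D_iL_d|_j denotes the i-th partial Fréchet derivative of L_d evaluated at (q_j, q_{j+1}, q_{j+2}, W_j, W_{j+1}). -/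
open scoped ContDiff BigOperators

attribute [local instance] Matrix.normedAddCommGroup Matrix.normedSpace

namespace Stmt9

variable {m n : ℕ}

abbrev Vec (m : ℕ) := Fin m → ℝ
abbrev Mat (n : ℕ) := Matrix (Fin n) (Fin n) ℝ

abbrev Tup (m n : ℕ) := Vec m × Vec m × Vec m × Mat n × Mat n

noncomputable def D1 (L : Tup m n → ℝ) (p : Tup m n) : Vec m →L[ℝ] ℝ :=
  fderiv ℝ (fun x => L (x, p.2.1, p.2.2.1, p.2.2.2.1, p.2.2.2.2)) p.1

noncomputable def D2 (L : Tup m n → ℝ) (p : Tup m n) : Vec m →L[ℝ] ℝ :=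
  fderiv ℝ (fun x => L (p.1, x, p.2.2.1, p.2.2.2.1, p.2.2.2.2)) p.2.1

noncomputable def D3 (L : Tup m n → ℝ) (p : Tup m n) : Vec m →L[ℝ] ℝ :=
  fderiv ℝ (fun x => L (p.1, p.2.1, x, p.2.2.2.1, p.2.2.2.2)) p.2.2.1

noncomputable def D4 (L : Tup m n → ℝ) (p : Tup m n) : Mat n →L[ℝ] ℝ :=
  fderiv ℝ (fun x => L (p.1, p.2.1, p.2.2.1, x, p.2.2.2.2)) p.2.2.2.1

noncomputable def D5 (L : Tup m n → ℝ) (p : Tup m n) : Mat n →L[ℝ] ℝ :=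
  fderiv ℝ (fun x => L (p.1, p.2.1, p.2.2.1, p.2.2.2.1, x)) p.2.2.2.2

/-- the discrete point `(q_j, q_{j+1}, q_{j+2}, W_j, W_{j+1})` -/
noncomputable def dpt (q : ℕ → Vec m) (g : ℕ → Mat n) (j : ℕ) : Tup m n :=
  (q j, q (j + 1), q (j + 2), (g j)⁻¹ * g (j + 1), (g (j + 1))⁻¹ * g (j + 2))

/-!
Differentiating the action along the variation, each summand contributes
`dL_d|_k (δq_k, δq_{k+1}, δq_{k+2}, W_k Σ_{k+1} - Σ_k W_k, W_{k+1} Σ_{k+2} - Σ_{k+1} W_{k+1})`,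
since `d/dε exp(-εΣ) W exp(εΣ')|_{ε=0} = W Σ' - Σ W`. Collecting the terms by the index `j`
of the variation (discrete integration by parts, the boundary terms vanishing) writes the
derivative as `∑_j (ℓ_j(δq_j) + π_j(Σ_j))`, where `ℓ_j = 0` and `π_j = 0` (`lagrangeForm`,
`poincareForm`) are the two Lagrange–Poincaré equations. Variations supported at a single interior index then show that
stationarity is equivalent to these equations.
-/

theorem hasDerivAt_exp_neg_smul_mul_mul_exp_smul {𝕂 𝔸 : Type*} [RCLike 𝕂] [NormedRing 𝔸]
    [NormedAlgebra 𝕂 𝔸] [CompleteSpace 𝔸] (S W S' : 𝔸) :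
    HasDerivAt (fun ε : 𝕂 => NormedSpace.exp (-(ε • S)) * W * NormedSpace.exp (ε • S'))
      (W * S' - S * W) 0 := by
  have hS : HasDerivAt (fun ε : 𝕂 => NormedSpace.exp (-(ε • S))) (-S) 0 := by
    simpa [← neg_smul] using hasDerivAt_exp_smul_const (𝕂 := 𝕂) (-S) 0
  have hS' : HasDerivAt (fun ε : 𝕂 => NormedSpace.exp (ε • S')) S' 0 := by
    simpa using hasDerivAt_exp_smul_const (𝕂 := 𝕂) S' 0
  have := (hS.mul_const W).mul hS'
  simp only [zero_smul, neg_zero, NormedSpace.exp_zero, one_mul, mul_one] at this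
  rw [show W * S' - S * W = -S * W + W * S' by noncomm_ring]
  exact this

theorem _root_.Matrix.isOpen_setOf_isUnit {ι R : Type*} [Fintype ι] [DecidableEq ι] [Field R]
    [TopologicalSpace R] [IsTopologicalRing R] [T1Space R] :
    IsOpen {A : Matrix ι ι R | IsUnit A} := by
  simp only [Matrix.isUnit_iff_isUnit_det, isUnit_iff_ne_zero]
  exact isOpen_ne.preimage continuous_id.matrix_det

theorem fderiv_apply_prodMk {𝕜 E F G : Type*} [NontriviallyNormedField 𝕜]
    [NormedAddCommGroup E] [NormedSpace 𝕜 E] [NormedAddCommGroup F] [NormedSpace 𝕜 F]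
    [NormedAddCommGroup G] [NormedSpace 𝕜 G] {f : E × F → G} {p : E × F}
    (hf : DifferentiableAt 𝕜 f p) (v : E) (w : F) :
    fderiv 𝕜 f p (v, w) =
      fderiv 𝕜 (fun x => f (x, p.2)) p.1 v + fderiv 𝕜 (fun y => f (p.1, y)) p.2 w := by
  have h₁ : HasFDerivAt (fun x => f (x, p.2)) ((fderiv 𝕜 f p).comp (.inl 𝕜 E F)) p.1 :=
    hf.hasFDerivAt.comp p.1 (hasFDerivAt_prodMk_left p.1 p.2)
  have h₂ : HasFDerivAt (fun y => f (p.1, y)) ((fderiv 𝕜 f p).comp (.inr 𝕜 E F)) p.2 :=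
    hf.hasFDerivAt.comp p.2 (hasFDerivAt_prodMk_right p.1 p.2)
  rw [h₁.fderiv, h₂.fderiv, ContinuousLinearMap.comp_apply, ContinuousLinearMap.comp_apply,
    ← map_add, ContinuousLinearMap.inl_apply, ContinuousLinearMap.inr_apply, Prod.mk_add_mk,
    add_zero, zero_add]

theorem sum_range_sub_one_add_eq {M : Type*} [AddCommMonoid M] {N i : ℕ} (hi : i ≤ 2)
    {f : ℕ → M} (hf : ∀ j ∈ ({0, 1, N - 1, N} : Finset ℕ), f j = 0) :
    ∑ k ∈ Finset.range (N - 1), f (k + i) = ∑ j ∈ Finset.range (N + 1), f j := by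
  refine (Finset.sum_map _ (addRightEmbedding i) f).symm.trans <|
    Finset.sum_subset (fun j hj => ?_) fun j hj hj' => hf j ?_
  · simp only [Finset.mem_map, Finset.mem_range, addRightEmbedding_apply] at hj ⊢
    omega
  · simp only [Finset.mem_map, Finset.mem_range, addRightEmbedding_apply, not_exists,
      not_and, Finset.mem_insert, Finset.mem_singleton] at hj hj' ⊢
    by_contra!
    exact hj' (j - i) (by omega) (by omega)

section linftyOp

-- `Mat n` carries the entrywise sup norm, which is not submultiplicative: the derivative of the
-- exponential is taken for the operator norm and read off entry by entry.
attribute [local instance] Matrix.linftyOpNormedAddCommGroup Matrix.linftyOpNormedRing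
  Matrix.linftyOpNormedSpace Matrix.linftyOpNormedAlgebra

theorem hasDerivAt_exp_conj_apply (S W S' : Mat n) (i j : Fin n) :
    HasDerivAt (fun ε : ℝ => (NormedSpace.exp (-(ε • S)) * W * NormedSpace.exp (ε • S')) i j)
      ((W * S' - S * W) i j) 0 :=
  (Matrix.entryLinearMap ℝ ℝ i j).toContinuousLinearMap.hasFDerivAt.comp_hasDerivAt 0
    (hasDerivAt_exp_neg_smul_mul_mul_exp_smul S W S')

end linftyOp

theorem hasDerivAt_exp_conj (S W S' : Mat n) :
    HasDerivAt (fun ε : ℝ => NormedSpace.exp (-(ε • S)) * W * NormedSpace.exp (ε • S'))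
      (W * S' - S * W) 0 :=
  hasDerivAt_pi.2 fun i => hasDerivAt_pi.2 fun j => hasDerivAt_exp_conj_apply S W S' i j

theorem fderiv_apply_eq_sum_partials {L : Tup m n → ℝ} {p : Tup m n}
    (hL : DifferentiableAt ℝ L p) (v : Tup m n) :
    fderiv ℝ L p v = D1 L p v.1 + D2 L p v.2.1 + D3 L p v.2.2.1 + D4 L p v.2.2.2.1
      + D5 L p v.2.2.2.2 := by
  obtain ⟨a, b, c, M, M'⟩ := p
  obtain ⟨δa, δb, δc, δM, δM'⟩ := v
  have h₂ : DifferentiableAt ℝ (fun y => L (a, y)) (b, c, M, M') := by fun_prop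
  have h₃ : DifferentiableAt ℝ (fun y => L (a, b, y)) (c, M, M') := by fun_prop
  have h₄ : DifferentiableAt ℝ (fun y => L (a, b, c, y)) (M, M') := by fun_prop
  refine (fderiv_apply_prodMk hL _ _).trans ?_
  rw [fderiv_apply_prodMk h₂, fderiv_apply_prodMk h₃, fderiv_apply_prodMk h₄]
  simp only [add_assoc]
  rfl

theorem differentiableAt_dpt {L : Tup m n → ℝ}
    (hL : ContDiffOn ℝ ∞ L {p : Tup m n | IsUnit p.2.2.2.1 ∧ IsUnit p.2.2.2.2})
    {g : ℕ → Mat n} (hg : ∀ i, IsUnit (g i)) (q : ℕ → Vec m) (k : ℕ) :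
    DifferentiableAt ℝ L (dpt q g k) := by
  have hopen : IsOpen {p : Tup m n | IsUnit p.2.2.2.1 ∧ IsUnit p.2.2.2.2} :=
    (Matrix.isOpen_setOf_isUnit.preimage (by fun_prop)).inter
      (Matrix.isOpen_setOf_isUnit.preimage (by fun_prop))
  have hinv : ∀ i, IsUnit (g i)⁻¹ := fun i => Matrix.isUnit_nonsing_inv_iff.2 (hg i)
  have hmem : dpt q g k ∈ {p : Tup m n | IsUnit p.2.2.2.1 ∧ IsUnit p.2.2.2.2} :=
    ⟨(hinv k).mul (hg (k + 1)), (hinv (k + 1)).mul (hg (k + 2))⟩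
  exact (hL.contDiffAt (hopen.mem_nhds hmem)).differentiableAt (by simp)

theorem hasDerivAt_variation {L : Tup m n → ℝ} {a b c : Vec m} {W W' : Mat n}
    (hL : DifferentiableAt ℝ L (a, b, c, W, W')) (δa δb δc : Vec m) (S₀ S₁ S₂ : Mat n) :
    HasDerivAt (fun ε : ℝ => L (a + ε • δa, b + ε • δb, c + ε • δc,
        NormedSpace.exp (-(ε • S₀)) * W * NormedSpace.exp (ε • S₁),
        NormedSpace.exp (-(ε • S₁)) * W' * NormedSpace.exp (ε • S₂)))
      (D1 L (a, b, c, W, W') δa + D2 L (a, b, c, W, W') δb + D3 L (a, b, c, W, W') δc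
        + D4 L (a, b, c, W, W') (W * S₁ - S₀ * W) + D5 L (a, b, c, W, W') (W' * S₂ - S₁ * W'))
      0 := by
  have hline : ∀ x v : Vec m, HasDerivAt (fun ε : ℝ => x + ε • v) v 0 := fun x v => by
    simpa using ((hasDerivAt_id (0 : ℝ)).smul_const v).const_add x
  have hcurve := (hline a δa).prodMk <| (hline b δb).prodMk <| (hline c δc).prodMk <|
    (hasDerivAt_exp_conj S₀ W S₁).prodMk (hasDerivAt_exp_conj S₁ W' S₂)
  refine (hL.hasFDerivAt.comp_hasDerivAt_of_eq 0 hcurve (by simp)).congr_deriv ?_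
  exact fderiv_apply_eq_sum_partials hL _

noncomputable def lagrangeForm (L : Tup m n → ℝ) (q : ℕ → Vec m) (g : ℕ → Mat n) (j : ℕ) :
    Vec m →L[ℝ] ℝ :=
  D1 L (dpt q g j) + D2 L (dpt q g (j - 1)) + D3 L (dpt q g (j - 2))

noncomputable def poincareForm (L : Tup m n → ℝ) (q : ℕ → Vec m) (g : ℕ → Mat n) (j : ℕ)
    (η : Mat n) : ℝ :=
  D4 L (dpt q g (j - 1)) ((g (j - 1))⁻¹ * g j * η)
    - D4 L (dpt q g j) (η * ((g j)⁻¹ * g (j + 1)))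
    - D5 L (dpt q g (j - 1)) (η * ((g j)⁻¹ * g (j + 1)))
    + D5 L (dpt q g (j - 2)) ((g (j - 1))⁻¹ * g j * η)

theorem poincareForm_zero (L : Tup m n → ℝ) (q : ℕ → Vec m) (g : ℕ → Mat n) (j : ℕ) :
    poincareForm L q g j 0 = 0 := by
  simp [poincareForm]

theorem deriv_action_eq_sum {N : ℕ} {L : Tup m n → ℝ}
    (hL : ContDiffOn ℝ ∞ L {p : Tup m n | IsUnit p.2.2.2.1 ∧ IsUnit p.2.2.2.2})
    (q : ℕ → Vec m) {g : ℕ → Mat n} (hg : ∀ i, IsUnit (g i)) {δq : ℕ → Vec m} {S : ℕ → Mat n}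
    (hq₀ : δq 0 = 0) (hq₁ : δq 1 = 0) (hqN₁ : δq (N - 1) = 0) (hqN : δq N = 0)
    (hS₀ : S 0 = 0) (hS₁ : S 1 = 0) (hSN₁ : S (N - 1) = 0) (hSN : S N = 0) :
    deriv (fun ε : ℝ =>
      ∑ k ∈ Finset.range (N - 1),
        L (q k + ε • δq k, q (k + 1) + ε • δq (k + 1), q (k + 2) + ε • δq (k + 2),
          NormedSpace.exp (-(ε • S k)) * ((g k)⁻¹ * g (k + 1))
            * NormedSpace.exp (ε • S (k + 1)),
          NormedSpace.exp (-(ε • S (k + 1))) * ((g (k + 1))⁻¹ * g (k + 2))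
            * NormedSpace.exp (ε • S (k + 2)))) 0
      = ∑ j ∈ Finset.range (N + 1), (lagrangeForm L q g j (δq j) + poincareForm L q g j (S j)) := by
  rw [(HasDerivAt.fun_sum fun k _ =>
    hasDerivAt_variation (differentiableAt_dpt hL hg q k) _ _ _ _ _ _).deriv]
  have hbd : ∀ j ∈ ({0, 1, N - 1, N} : Finset ℕ), δq j = 0 ∧ S j = 0 := by simp [*]
  -- `Pᵢ j` is the part of the first variation of summand `j - i` that pairs with `(δq j, S j)`
  set P₀ : ℕ → ℝ := fun j =>
    D1 L (dpt q g j) (δq j) - D4 L (dpt q g j) (S j * ((g j)⁻¹ * g (j + 1)))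
  set P₁ : ℕ → ℝ := fun j => D2 L (dpt q g (j - 1)) (δq j)
    + D4 L (dpt q g (j - 1)) ((g (j - 1))⁻¹ * g j * S j)
    - D5 L (dpt q g (j - 1)) (S j * ((g j)⁻¹ * g (j + 1)))
  set P₂ : ℕ → ℝ := fun j => D3 L (dpt q g (j - 2)) (δq j)
    + D5 L (dpt q g (j - 2)) ((g (j - 1))⁻¹ * g j * S j)
  have hP₀ : ∀ j ∈ ({0, 1, N - 1, N} : Finset ℕ), P₀ j = 0 := fun j hj => by
    simp [P₀, (hbd j hj).1, (hbd j hj).2]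
  have hP₁ : ∀ j ∈ ({0, 1, N - 1, N} : Finset ℕ), P₁ j = 0 := fun j hj => by
    simp [P₁, (hbd j hj).1, (hbd j hj).2]
  have hP₂ : ∀ j ∈ ({0, 1, N - 1, N} : Finset ℕ), P₂ j = 0 := fun j hj => by
    simp [P₂, (hbd j hj).1, (hbd j hj).2]
  calc _ = ∑ k ∈ Finset.range (N - 1), (P₀ (k + 0) + P₁ (k + 1) + P₂ (k + 2)) := by
        refine Finset.sum_congr rfl fun k _ => ?_
        simp only [P₀, P₁, P₂, dpt, map_sub, Nat.add_sub_cancel, add_zero,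
          show k + 2 - 1 = k + 1 by omega, show k + 1 + 1 = k + 2 by omega]
        ring
    _ = ∑ j ∈ Finset.range (N + 1), (P₀ j + P₁ j + P₂ j) := by
        simp only [Finset.sum_add_distrib]
        rw [sum_range_sub_one_add_eq (by norm_num) hP₀,
          sum_range_sub_one_add_eq (by norm_num) hP₁,
          sum_range_sub_one_add_eq (by norm_num) hP₂]
    _ = _ := by
        refine Finset.sum_congr rfl fun j _ => ?_
        simp only [P₀, P₁, P₂, lagrangeForm, poincareForm, add_apply]
        ring

theorem forall_boundary_sum_eq_zero_iff {E F R : Type*} [Zero E] [Zero F] [AddCommMonoid R]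
    (N : ℕ) (φ : ℕ → E → R) (ψ : ℕ → F → R) (hφ : ∀ j, φ j 0 = 0) (hψ : ∀ j, ψ j 0 = 0) :
    (∀ δ : ℕ → E, δ 0 = 0 → δ 1 = 0 → δ (N - 1) = 0 → δ N = 0 →
      ∀ σ : ℕ → F, σ 0 = 0 → σ 1 = 0 → σ (N - 1) = 0 → σ N = 0 →
        ∑ j ∈ Finset.range (N + 1), (φ j (δ j) + ψ j (σ j)) = 0)
      ↔ ∀ k, 2 ≤ k → k ≤ N - 2 → (∀ x, φ k x = 0) ∧ ∀ y, ψ k y = 0 := by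
  constructor
  · intro h k hk hkN
    have hsingle : ∀ x y, φ k x + ψ k y = 0 := fun x y => by
      obtain ⟨h₀, h₁, hN₁, hN⟩ : 0 ≠ k ∧ 1 ≠ k ∧ N - 1 ≠ k ∧ N ≠ k := by omega
      have hsum := h (Pi.single k x) (Pi.single_eq_of_ne h₀ _) (Pi.single_eq_of_ne h₁ _)
        (Pi.single_eq_of_ne hN₁ _) (Pi.single_eq_of_ne hN _) (Pi.single k y)
        (Pi.single_eq_of_ne h₀ _) (Pi.single_eq_of_ne h₁ _) (Pi.single_eq_of_ne hN₁ _)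
        (Pi.single_eq_of_ne hN _)
      rw [Finset.sum_eq_single_of_mem k (Finset.mem_range.2 (by omega))
        fun j _ hj => by simp [Pi.single_eq_of_ne hj, hφ, hψ]] at hsum
      simpa using hsum
    exact ⟨fun x => by simpa [hψ] using hsingle x 0, fun y => by simpa [hφ] using hsingle 0 y⟩
  · intro h δ hδ₀ hδ₁ hδN₁ hδN σ hσ₀ hσ₁ hσN₁ hσN
    refine Finset.sum_eq_zero fun j hj => ?_
    by_cases hint : 2 ≤ j ∧ j ≤ N - 2
    · rw [(h j hint.1 hint.2).1, (h j hint.1 hint.2).2, add_zero]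
    · have : j = 0 ∨ j = 1 ∨ j = N - 1 ∨ j = N := by have := Finset.mem_range.1 hj; omega
      rcases this with rfl | rfl | rfl | rfl <;> simp [*]

theorem discrete_secondOrder_lagrange_poincare_general
    (N : ℕ)
    (L : Tup m n → ℝ)
    (hL : ContDiffOn ℝ ∞ L
      {p : Tup m n | IsUnit p.2.2.2.1 ∧ IsUnit p.2.2.2.2})
    (q : ℕ → Vec m) (g : ℕ → Mat n) (hg : ∀ i, IsUnit (g i)) :
    (∀ δq : ℕ → Vec m, δq 0 = 0 → δq 1 = 0 → δq (N - 1) = 0 → δq N = 0 →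
      ∀ S : ℕ → Mat n, S 0 = 0 → S 1 = 0 → S (N - 1) = 0 → S N = 0 →
        deriv (fun ε : ℝ =>
          ∑ k ∈ Finset.range (N - 1),
            L (q k + ε • δq k, q (k + 1) + ε • δq (k + 1), q (k + 2) + ε • δq (k + 2),
              NormedSpace.exp (-(ε • S k)) * ((g k)⁻¹ * g (k + 1))
                * NormedSpace.exp (ε • S (k + 1)),
              NormedSpace.exp (-(ε • S (k + 1))) * ((g (k + 1))⁻¹ * g (k + 2))
                * NormedSpace.exp (ε • S (k + 2)))) 0 = 0)
      ↔ ∀ k : ℕ, 2 ≤ k → k ≤ N - 2 →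
        (D1 L (dpt q g k) + D2 L (dpt q g (k - 1)) + D3 L (dpt q g (k - 2)) = 0)
        ∧ ∀ η : Mat n,
            D4 L (dpt q g (k - 1)) ((g (k - 1))⁻¹ * g k * η)
              - D4 L (dpt q g k) (η * ((g k)⁻¹ * g (k + 1)))
              - D5 L (dpt q g (k - 1)) (η * ((g k)⁻¹ * g (k + 1)))
              + D5 L (dpt q g (k - 2)) ((g (k - 1))⁻¹ * g k * η) = 0 := by
  refine Iff.trans ?_ ((forall_boundary_sum_eq_zero_iff N (fun j => lagrangeForm L q g j)
    (poincareForm L q g) (fun j => map_zero _) (poincareForm_zero L q g)).trans ?_)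
  · refine forall_congr' fun δq => forall₄_congr fun hq₀ hq₁ hqN₁ hqN =>
      forall_congr' fun S => forall₄_congr fun hS₀ hS₁ hSN₁ hSN => ?_
    rw [deriv_action_eq_sum hL q hg hq₀ hq₁ hqN₁ hqN hS₀ hS₁ hSN₁ hSN]
  · exact forall₃_congr fun k _ _ => and_congr
      (ContinuousLinearMap.ext_iff (f := lagrangeForm L q g k) (g := 0)).symm Iff.rfl

/-- **Discrete second-order Lagrange–Poincaré equations.**  For a `G`-invariant
discrete second-order Lagrangian the discrete action is stationary under all
variations fixing the boundary data if and only if the discrete second-order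
Lagrange–Poincaré equations hold for `k = 2, …, N-2`. -/
theorem discrete_secondOrder_lagrange_poincare
    (N : ℕ) (hN : 4 ≤ N)
    (L : Tup m n → ℝ)
    (hL : ContDiffOn ℝ ∞ L
      {p : Tup m n | IsUnit p.2.2.2.1 ∧ IsUnit p.2.2.2.2})
    (q : ℕ → Vec m) (g : ℕ → Mat n) (hg : ∀ i, IsUnit (g i)) :
    (∀ δq : ℕ → Vec m, δq 0 = 0 → δq 1 = 0 → δq (N - 1) = 0 → δq N = 0 →
      ∀ S : ℕ → Mat n, S 0 = 0 → S 1 = 0 → S (N - 1) = 0 → S N = 0 →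
        deriv (fun ε : ℝ =>
          ∑ k ∈ Finset.range (N - 1),
            L (q k + ε • δq k, q (k + 1) + ε • δq (k + 1), q (k + 2) + ε • δq (k + 2),
              NormedSpace.exp (-(ε • S k)) * ((g k)⁻¹ * g (k + 1))
                * NormedSpace.exp (ε • S (k + 1)),
              NormedSpace.exp (-(ε • S (k + 1))) * ((g (k + 1))⁻¹ * g (k + 2))
                * NormedSpace.exp (ε • S (k + 2)))) 0 = 0)
      ↔ ∀ k : ℕ, 2 ≤ k → k ≤ N - 2 →
        (D1 L (dpt q g k) + D2 L (dpt q g (k - 1)) + D3 L (dpt q g (k - 2)) = 0)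
        ∧ ∀ η : Mat n,
            D4 L (dpt q g (k - 1)) ((g (k - 1))⁻¹ * g k * η)
              - D4 L (dpt q g k) (η * ((g k)⁻¹ * g (k + 1)))
              - D5 L (dpt q g (k - 1)) (η * ((g k)⁻¹ * g (k + 1)))
              + D5 L (dpt q g (k - 2)) ((g (k - 1))⁻¹ * g k * η) = 0 :=
  discrete_secondOrder_lagrange_poincare_general N L hL q g hg

end Stmt9
end

section
/- Let m, n, k, N ∈ ℕ with k ≥ 1 and N > 2k, and let L_d : (ℝ^m)^{k+1} × Matrix(n,ℝ)^k → ℝ be smooth on the open set where all matrix arguments are invertible (a G-invariant discrete higher-order Lagrangian with arguments (q_i, …, q_{i+k}, W_i, …, W_{i+k-1})). Given q₀, …, q_N ∈ ℝ^m and invertible g₀, …, g_N ∈ Matrix(n,ℝ), set W_i = g_i⁻¹ g_{i+1} and A_d = Σ_{i=0}^{N-k} L_d(q_i, …, q_{i+k}, W_i, …, W_{i+k-1}). Then A_d is stationary under all variations q_i(ε) = q_i + ε δq_i and g_i(ε) = g_i · exp(ε Σ_i) with δq_i = 0 and Σ_i = 0 for i ∈ {0, …, k−1} ∪ {N−k+1,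 …, N}, if and only if the discrete higher-order Lagrange–Poincaré equations hold for i = k, …, N−k: Σ_{j=0}^{k} D_{q,j}L_d^{(i-j)} = 0 in (ℝ^m)*, and for every η ∈ Matrix(n,ℝ): Σ_{j=1}^{k} D_{W,j}L_d^{(i-j)}(W_{i-1} η) − Σ_{j=1}^{k} D_{W,j}L_d^{(i-j+1)}(η W_i) = 0, where L_d^{(r)} denotes L_d evaluated at (q_r, …, q_{r+k}, W_r, …, W_{r+k-1}), D_{q,j} is the partial Fréchet derivative with respect to the (j+1)-th ℝ^m argument, and D_{W,j} is the partial Fréchet derivative with respect to the j-th matrix argument. -/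
/-!
The derivative of the action at `ε = 0` is computed slot by slot. Since
`(g exp(εΣ))⁻¹ = exp(-εΣ) g⁻¹`, the slot `W_i = g_i⁻¹ g_{i+1}` moves with velocity
`W_i Σ_{i+1} - Σ_i W_i`, so the chain rule writes the derivative as
`∑_i (∑_j D_{q,j} L^{(i)} (δq_{i+j}) + ∑_j D_{W,j} L^{(i)} (W_{i+j} Σ_{i+j+1} - Σ_{i+j} W_{i+j}))`.
Collecting the terms at each time `r = i + j` (resp. `r = i + j + 1`) — a discrete integration
by parts, with no boundary terms because the variations vanish outside `[k, N - k]` — turns this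
into `∑_{r = k}^{N - k} (E_r (δq_r) + F_r (Σ_r))`, where `E_r = 0` and `F_r = 0` are the
Lagrange–Poincaré equations at time `r`. Such a sum vanishes for all admissible variations iff
every `E_r` and `F_r` vanishes, as one sees from variations concentrated at a single time.
-/

open scoped ContDiff BigOperators

attribute [local instance] Matrix.normedAddCommGroup Matrix.normedSpace

namespace Stmt10

variable {m n k : ℕ}

abbrev Vec (m : ℕ) := Fin m → ℝ
abbrev Mat (n : ℕ) := Matrix (Fin n) (Fin n) ℝ

abbrev Tup (m n k : ℕ) := (Fin (k + 1) → Vec m) × (Fin k → Mat n)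

/-- partial Fréchet derivative with respect to the `(j+1)`-th `ℝ^m`-slot -/
noncomputable def Dq (L : Tup m n k → ℝ) (j : Fin (k + 1)) (p : Tup m n k) :
    Vec m →L[ℝ] ℝ :=
  fderiv ℝ (fun x => L (Function.update p.1 j x, p.2)) (p.1 j)

/-- partial Fréchet derivative with respect to the `j`-th matrix slot -/
noncomputable def DW (L : Tup m n k → ℝ) (j : Fin k) (p : Tup m n k) :
    Mat n →L[ℝ] ℝ :=
  fderiv ℝ (fun x => L (p.1, Function.update p.2 j x)) (p.2 j)

/-- the discrete point `(q_i, …, q_{i+k}, W_i, …, W_{i+k-1})` -/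
noncomputable def dpt (q : ℕ → Vec m) (g : ℕ → Mat n) (i : ℕ) : Tup m n k :=
  (fun j : Fin (k + 1) => q (i + j),
   fun j : Fin k => (g (i + j))⁻¹ * g (i + j + 1))

section LinftyOp

attribute [local instance] Matrix.linftyOpNormedAddCommGroup Matrix.linftyOpNormedSpace
  Matrix.linftyOpNormedRing Matrix.linftyOpNormedAlgebra

-- Stated entrywise: the `ℓ∞`-operator norm of this section, needed for a normed algebra structure,
-- must not leak into a statement used under the file-wide entrywise sup norm.
theorem hasDerivAt_exp_smul_apply {ι : Type*} [Fintype ι] [DecidableEq ι]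
    (S : Matrix ι ι ℝ) (a b : ι) :
    HasDerivAt (fun ε : ℝ => NormedSpace.exp (ε • S) a b) (S a b) 0 := by
  have h := hasDerivAt_exp_smul_const (𝕂 := ℝ) S 0
  simp only [zero_smul, NormedSpace.exp_zero, one_mul] at h
  exact (Matrix.entryLinearMap ℝ ℝ a b).toContinuousLinearMap.hasFDerivAt.comp_hasDerivAt 0 h

end LinftyOp

theorem hasDerivAt_exp_smul {ι : Type*} [Fintype ι] [DecidableEq ι] (S : Matrix ι ι ℝ) :
    HasDerivAt (fun ε : ℝ => NormedSpace.exp (ε • S)) S 0 :=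
  hasDerivAt_pi.2 fun a => hasDerivAt_pi.2 (hasDerivAt_exp_smul_apply S a)

theorem _root_.HasDerivAt.matrix_mul {ι : Type*} [Fintype ι] [DecidableEq ι]
    {f h : ℝ → Matrix ι ι ℝ} {f' h' : Matrix ι ι ℝ} {t : ℝ}
    (hf : HasDerivAt f f' t) (hh : HasDerivAt h h' t) :
    HasDerivAt (fun x => f x * h x) (f' * h t + f t * h') t := by
  let : NormedRing (Matrix ι ι ℝ) := Matrix.linftyOpNormedRing
  let : NormedAlgebra ℝ (Matrix ι ι ℝ) := Matrix.linftyOpNormedAlgebra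
  exact hf.mul hh

theorem hasDerivAt_inv_mul_exp {ι : Type*} [Fintype ι] [DecidableEq ι]
    (g g' S S' : Matrix ι ι ℝ) :
    HasDerivAt (fun ε : ℝ =>
        (g * NormedSpace.exp (ε • S))⁻¹ * (g' * NormedSpace.exp (ε • S')))
      (g⁻¹ * g' * S' - S * (g⁻¹ * g')) 0 := by
  have hconj : (fun ε : ℝ => (g * NormedSpace.exp (ε • S))⁻¹ * (g' * NormedSpace.exp (ε • S')))
      = fun ε => NormedSpace.exp (ε • -S) * (g⁻¹ * g') * NormedSpace.exp (ε • S') := by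
    funext ε
    rw [Matrix.mul_inv_rev, smul_neg, Matrix.exp_neg]
    simp only [mul_assoc]
  have h := ((hasDerivAt_exp_smul (-S)).matrix_mul (hasDerivAt_const (0 : ℝ) (g⁻¹ * g'))).matrix_mul
    (hasDerivAt_exp_smul S')
  simp only [zero_smul, NormedSpace.exp_zero, mul_zero, add_zero, one_mul, mul_one] at h
  rw [hconj]
  convert h using 1
  noncomm_ring

theorem hasFDerivAt_update_eq_single {ι : Type*} [Fintype ι] [DecidableEq ι] {E : ι → Type*}
    [∀ i, NormedAddCommGroup (E i)] [∀ i, NormedSpace ℝ (E i)] (x : ∀ i, E i) {i : ι} (y : E i) :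
    HasFDerivAt (Function.update x i) (ContinuousLinearMap.single ℝ E i) y := by
  refine (hasFDerivAt_update x y).congr_fderiv (ContinuousLinearMap.ext fun v => funext fun j => ?_)
  rcases eq_or_ne j i with rfl | hji <;> simp [*]

theorem isOpen_setOf_forall_isUnit_snd : IsOpen {p : Tup m n k | ∀ j, IsUnit (p.2 j)} := by
  simp only [Set.ofPred_forall, Matrix.isUnit_iff_isUnit_det]
  exact isOpen_iInter_of_finite fun j =>
    Units.isOpen.preimage ((continuous_apply j).comp continuous_snd).matrix_det

theorem dpt_mem_setOf_forall_isUnit_snd {g : ℕ → Mat n} (hg : ∀ i, IsUnit (g i))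
    (q : ℕ → Vec m) (i : ℕ) : dpt q g i ∈ {p : Tup m n k | ∀ j, IsUnit (p.2 j)} := fun _ =>
  (Matrix.isUnit_nonsing_inv_iff.2 (hg _)).mul (hg _)

section Partials

variable {L : Tup m n k → ℝ} {p : Tup m n k}

theorem Dq_eq_comp (hL : DifferentiableAt ℝ L p) (j : Fin (k + 1)) :
    Dq L j p = ((fderiv ℝ L p).comp (.inl ℝ _ _)).comp (.single ℝ (fun _ => Vec m) j) := by
  have hupd : HasFDerivAt (fun x : Vec m => (Function.update p.1 j x, p.2))
      ((ContinuousLinearMap.inl ℝ _ (Fin k → Mat n)).comp (.single ℝ (fun _ => Vec m) j))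
      (p.1 j) :=
    (hasFDerivAt_update_eq_single p.1 (p.1 j)).prodMk (hasFDerivAt_const p.2 _)
  have hL' : HasFDerivAt L (fderiv ℝ L p) (Function.update p.1 j (p.1 j), p.2) := by
    simpa using hL.hasFDerivAt
  exact (hL'.comp (p.1 j) hupd).fderiv

theorem DW_eq_comp (hL : DifferentiableAt ℝ L p) (j : Fin k) :
    DW L j p = ((fderiv ℝ L p).comp (.inr ℝ _ _)).comp (.single ℝ (fun _ => Mat n) j) := by
  have hupd : HasFDerivAt (fun x : Mat n => (p.1, Function.update p.2 j x))
      ((ContinuousLinearMap.inr ℝ (Fin (k + 1) → Vec m) _).comp (.single ℝ (fun _ => Mat n) j))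
      (p.2 j) :=
    (hasFDerivAt_const p.1 _).prodMk (hasFDerivAt_update_eq_single p.2 (p.2 j))
  have hL' : HasFDerivAt L (fderiv ℝ L p) (p.1, Function.update p.2 j (p.2 j)) := by
    simpa using hL.hasFDerivAt
  exact (hL'.comp (p.2 j) hupd).fderiv

theorem fderiv_apply_eq_sum_Dq_add_sum_DW (hL : DifferentiableAt ℝ L p)
    (u : Fin (k + 1) → Vec m) (v : Fin k → Mat n) :
    fderiv ℝ L p (u, v) = ∑ j, Dq L j p (u j) + ∑ j, DW L j p (v j) := by
  simp only [Dq_eq_comp hL, DW_eq_comp hL, ContinuousLinearMap.sum_comp_single]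
  exact ((fderiv ℝ L p).comp_inl_add_comp_inr (u, v)).symm

end Partials

theorem hasDerivAt_dpt_variation (q δq : ℕ → Vec m) (g S : ℕ → Mat n) (i : ℕ) :
    HasDerivAt
      (fun ε : ℝ => (dpt (fun r => q r + ε • δq r) (fun r => g r * NormedSpace.exp (ε • S r)) i :
        Tup m n k))
      (fun j => δq (i + j),
        fun j => (g (i + j))⁻¹ * g (i + j + 1) * S (i + j + 1)
          - S (i + j) * ((g (i + j))⁻¹ * g (i + j + 1))) 0 := by
  refine HasDerivAt.prodMk (hasDerivAt_pi.2 fun j => ?_) (hasDerivAt_pi.2 fun j => ?_)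
  · simpa using ((hasDerivAt_id (0 : ℝ)).smul_const (δq (i + j))).const_add (q (i + j))
  · exact hasDerivAt_inv_mul_exp _ _ _ _

theorem hasDerivAt_lagrangian_dpt_variation {L : Tup m n k → ℝ}
    (hL : ContDiffOn ℝ ∞ L {p : Tup m n k | ∀ j, IsUnit (p.2 j)})
    {g : ℕ → Mat n} (hg : ∀ i, IsUnit (g i)) (q δq : ℕ → Vec m) (S : ℕ → Mat n) (i : ℕ) :
    HasDerivAt
      (fun ε : ℝ => L (dpt (fun r => q r + ε • δq r) (fun r => g r * NormedSpace.exp (ε • S r)) i))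
      (∑ j : Fin (k + 1), Dq L j (dpt q g i) (δq (i + j))
        + ∑ j : Fin k, DW L j (dpt q g i)
            ((g (i + j))⁻¹ * g (i + j + 1) * S (i + j + 1)
              - S (i + j) * ((g (i + j))⁻¹ * g (i + j + 1)))) 0 := by
  have hd : DifferentiableAt ℝ L (dpt q g i) :=
    (hL.contDiffAt (isOpen_setOf_forall_isUnit_snd.mem_nhds
      (dpt_mem_setOf_forall_isUnit_snd hg q i))).differentiableAt (by simp)
  have hd₀ : HasFDerivAt L (fderiv ℝ L (dpt q g i))
      (dpt (fun r => q r + (0 : ℝ) • δq r) (fun r => g r * NormedSpace.exp ((0 : ℝ) • S r)) i) := by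
    simpa using hd.hasFDerivAt
  rw [← fderiv_apply_eq_sum_Dq_add_sum_DW hd]
  exact hd₀.comp_hasDerivAt 0 (hasDerivAt_dpt_variation q δq g S i)

theorem sum_range_add_eq_sum_Icc {M : Type*} [AddCommMonoid M] {a b d : ℕ} (hd : d ≤ a)
    {G : ℕ → M} (hG : ∀ r ≤ b + d, r ∉ Finset.Icc a b → G r = 0) :
    ∑ i ∈ Finset.range (b + 1), G (i + d) = ∑ r ∈ Finset.Icc a b, G r := by
  rw [Finset.range_eq_Ico, Finset.sum_Ico_add', zero_add]
  refine (Finset.sum_subset (fun r hr => ?_) fun r hr hr' => hG r ?_ hr').symm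
  · simp only [Finset.mem_Icc, Finset.mem_Ico] at hr ⊢
    omega
  · simp only [Finset.mem_Ico] at hr
    omega

theorem sum_range_sum_add_eq_sum_Icc {ι M : Type*} [Fintype ι] [AddCommMonoid M] {a b : ℕ}
    (d : ι → ℕ) (hd : ∀ j, d j ≤ a) {G : ι → ℕ → M}
    (hG : ∀ j, ∀ r ≤ b + a, r ∉ Finset.Icc a b → G j r = 0) :
    ∑ i ∈ Finset.range (b + 1), ∑ j, G j (i + d j) = ∑ r ∈ Finset.Icc a b, ∑ j, G j r := by
  rw [Finset.sum_comm, Finset.sum_comm (s := Finset.Icc a b)]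
  exact Finset.sum_congr rfl fun j _ =>
    sum_range_add_eq_sum_Icc (hd j) fun r hr => hG j r (hr.trans (Nat.add_le_add_left (hd j) b))

noncomputable def lagrangePoincareQ (L : Tup m n k → ℝ) (q : ℕ → Vec m) (g : ℕ → Mat n)
    (i : ℕ) : Vec m →L[ℝ] ℝ :=
  ∑ j : Fin (k + 1), Dq L j (dpt q g (i - j))

noncomputable def lagrangePoincareW (L : Tup m n k → ℝ) (q : ℕ → Vec m) (g : ℕ → Mat n)
    (i : ℕ) (η : Mat n) : ℝ :=
  ∑ j : Fin k, DW L j (dpt q g (i - (j + 1))) ((g (i - 1))⁻¹ * g i * η)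
    - ∑ j : Fin k, DW L j (dpt q g (i - j)) (η * ((g i)⁻¹ * g (i + 1)))

@[simp]
theorem lagrangePoincareW_zero (L : Tup m n k → ℝ) (q : ℕ → Vec m) (g : ℕ → Mat n) (i : ℕ) :
    lagrangePoincareW L q g i 0 = 0 := by
  simp [lagrangePoincareW]

theorem deriv_action_variation {N : ℕ} (hkN : k ≤ N) {L : Tup m n k → ℝ}
    (hL : ContDiffOn ℝ ∞ L {p : Tup m n k | ∀ j, IsUnit (p.2 j)})
    (q : ℕ → Vec m) {g : ℕ → Mat n} (hg : ∀ i, IsUnit (g i)) {δq : ℕ → Vec m} {S : ℕ → Mat n}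
    (hbd : ∀ i : ℕ, (i < k ∨ (N - k + 1 ≤ i ∧ i ≤ N)) → δq i = 0 ∧ S i = 0) :
    deriv (fun ε : ℝ => ∑ i ∈ Finset.range (N - k + 1),
        L (dpt (fun r => q r + ε • δq r) (fun r => g r * NormedSpace.exp (ε • S r)) i)) 0
      = ∑ r ∈ Finset.Icc k (N - k),
          (lagrangePoincareQ L q g r (δq r) + lagrangePoincareW L q g r (S r)) := by
  have hvanish : ∀ r ≤ N - k + k, r ∉ Finset.Icc k (N - k) → δq r = 0 ∧ S r = 0 :=
    fun r hr hr' => hbd r (by rw [Finset.mem_Icc] at hr'; omega)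
  have hq := sum_range_sum_add_eq_sum_Icc (fun j : Fin (k + 1) => (j : ℕ)) Fin.is_le
    (b := N - k) (G := fun j r => Dq L j (dpt q g (r - j)) (δq r))
    fun j r hr hr' => by simp [(hvanish r hr hr').1]
  have hW₁ := sum_range_sum_add_eq_sum_Icc (fun j : Fin k => (j : ℕ) + 1) (fun j => j.isLt)
    (b := N - k) (G := fun j r => DW L j (dpt q g (r - (j + 1))) ((g (r - 1))⁻¹ * g r * S r))
    fun j r hr hr' => by simp [(hvanish r hr hr').2]
  have hW₂ := sum_range_sum_add_eq_sum_Icc (fun j : Fin k => (j : ℕ)) (fun j => j.isLt.le)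
    (b := N - k) (G := fun j r => DW L j (dpt q g (r - j)) (S r * ((g r)⁻¹ * g (r + 1))))
    fun j r hr hr' => by simp [(hvanish r hr hr').2]
  simp only [← add_assoc, Nat.add_sub_add_right, Nat.add_sub_cancel] at hq hW₁ hW₂
  rw [(HasDerivAt.fun_sum fun i _ =>
    hasDerivAt_lagrangian_dpt_variation hL hg q δq S i).deriv]
  simp only [lagrangePoincareQ, lagrangePoincareW, map_sub, sum_apply, Finset.sum_add_distrib,
    Finset.sum_sub_distrib]
  rw [hq, hW₁, hW₂]

theorem discrete_higherOrder_lagrange_poincare_general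
    (N : ℕ) (hN : 2 * k < N)
    (L : Tup m n k → ℝ)
    (hL : ContDiffOn ℝ ∞ L {p : Tup m n k | ∀ j, IsUnit (p.2 j)})
    (q : ℕ → Vec m) (g : ℕ → Mat n) (hg : ∀ i, IsUnit (g i)) :
    (∀ (δq : ℕ → Vec m) (S : ℕ → Mat n),
      (∀ i : ℕ, (i < k ∨ (N - k + 1 ≤ i ∧ i ≤ N)) → δq i = 0 ∧ S i = 0) →
        deriv (fun ε : ℝ =>
          ∑ i ∈ Finset.range (N - k + 1),
            L (fun j : Fin (k + 1) => q (i + j) + ε • δq (i + j),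
               fun j : Fin k =>
                 (g (i + j) * NormedSpace.exp (ε • S (i + j)))⁻¹
                   * (g (i + j + 1) * NormedSpace.exp (ε • S (i + j + 1))))) 0 = 0)
      ↔ ∀ i : ℕ, k ≤ i → i ≤ N - k →
        (∑ j : Fin (k + 1), Dq L j (dpt q g (i - j)) = 0)
        ∧ ∀ η : Mat n,
            ∑ j : Fin k, DW L j (dpt q g (i - (j + 1))) ((g (i - 1))⁻¹ * g i * η)
              - ∑ j : Fin k, DW L j (dpt q g (i - j)) (η * ((g i)⁻¹ * g (i + 1)))
              = 0 := by
  have hkN : k ≤ N := by omega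
  constructor
  · intro hstat i hki hiN
    have hlocal : ∀ (δq : ℕ → Vec m) (S : ℕ → Mat n), (∀ r, r ≠ i → δq r = 0 ∧ S r = 0) →
        lagrangePoincareQ L q g i (δq i) + lagrangePoincareW L q g i (S i) = 0 := by
      intro δq S hsupp
      have hbd : ∀ r : ℕ, (r < k ∨ (N - k + 1 ≤ r ∧ r ≤ N)) → δq r = 0 ∧ S r = 0 :=
        fun r hr => hsupp r (by omega)
      rw [← (deriv_action_variation hkN hL q hg hbd).symm.trans (hstat δq S hbd),
        Finset.sum_eq_single_of_mem i (Finset.mem_Icc.2 ⟨hki, hiN⟩)]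
      intro r _ hr
      simp [(hsupp r hr).1, (hsupp r hr).2]
    refine ⟨(ContinuousLinearMap.ext fun w => ?_ : lagrangePoincareQ L q g i = 0),
      fun η => (?_ : lagrangePoincareW L q g i η = 0)⟩
    · simpa using hlocal (Pi.single i w) 0 fun r hr => ⟨by simp [hr], rfl⟩
    · simpa using hlocal 0 (Pi.single i η) fun r hr => ⟨rfl, by simp [hr]⟩
  · intro hLP δq S hbd
    refine (deriv_action_variation hkN hL q hg hbd).trans (Finset.sum_eq_zero fun r hr => ?_)
    obtain ⟨hr₁, hr₂⟩ := Finset.mem_Icc.1 hr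
    obtain ⟨hQ, hW⟩ := hLP r hr₁ hr₂
    rw [lagrangePoincareQ, hQ, zero_apply, zero_add]
    exact hW (S r)

/-- **Discrete higher-order Lagrange–Poincaré equations.**  For a `G`-invariant
discrete higher-order Lagrangian, the discrete action is stationary under all
variations fixing the boundary data if and only if the discrete higher-order
Lagrange–Poincaré equations hold for `i = k, …, N-k`. -/
theorem discrete_higherOrder_lagrange_poincare
    (N : ℕ) (hk : 1 ≤ k) (hN : 2 * k < N)
    (L : Tup m n k → ℝ)
    (hL : ContDiffOn ℝ ∞ L {p : Tup m n k | ∀ j, IsUnit (p.2 j)})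
    (q : ℕ → Vec m) (g : ℕ → Mat n) (hg : ∀ i, IsUnit (g i)) :
    (∀ (δq : ℕ → Vec m) (S : ℕ → Mat n),
      (∀ i : ℕ, (i < k ∨ (N - k + 1 ≤ i ∧ i ≤ N)) → δq i = 0 ∧ S i = 0) →
        deriv (fun ε : ℝ =>
          ∑ i ∈ Finset.range (N - k + 1),
            L (fun j : Fin (k + 1) => q (i + j) + ε • δq (i + j),
               fun j : Fin k =>
                 (g (i + j) * NormedSpace.exp (ε • S (i + j)))⁻¹
                   * (g (i + j + 1) * NormedSpace.exp (ε • S (i + j + 1))))) 0 = 0)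
      ↔ ∀ i : ℕ, k ≤ i → i ≤ N - k →
        (∑ j : Fin (k + 1), Dq L j (dpt q g (i - j)) = 0)
        ∧ ∀ η : Mat n,
            ∑ j : Fin k, DW L j (dpt q g (i - (j + 1))) ((g (i - 1))⁻¹ * g i * η)
              - ∑ j : Fin k, DW L j (dpt q g (i - j)) (η * ((g i)⁻¹ * g (i + 1)))
              = 0 :=
  discrete_higherOrder_lagrange_poincare_general N hN L hL q g hg

end Stmt10
end

section
/- Let n, N ∈ ℕ with N ≥ 2 and let L_d be a smooth real-valued function on pairs of invertible n×n real matrices which is left-invariant: L_d(g·a, g·b) = L_d(a, b) for all invertible g, a, b. Define the reduced Lagrangian L̂(W) := L_d(1, W). Fix invertible g₀ and g_N. Then for a sequence of invertible matrices g₀, g₁, …, g_N with W_k := g_k⁻¹ g_{k+1}, the following are equivalent: (a) for all η₀, η₁, …, η_N ∈ Matrix(n,ℝ) with η₀ = η_N = 0, the derivative at ε = 0 of Σ_{k=0}^{N-1} L_d(g_k · exp(ε η_k), g_{k+1} · exp(ε η_{k+1})) vanishes; (b) the discrete Euler–Poincaré equations hold: for every k = 1, …, N−1 and every η ∈ Matrix(n,ℝ),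 DL̂(W_k)(η · W_k) = DL̂(W_{k-1})(W_{k-1} · η), i.e. r*_{W_k} L̂'(W_k) − ℓ*_{W_{k-1}} L̂'(W_{k-1}) = 0. -/
/-!
By left invariance, `L_d(a exp(εη), b exp(εζ)) = L̂(exp(-εη) a⁻¹b exp(εζ))`, so the `k`-th term of
the action has derivative `DL̂(W_k)(W_k η_{k+1} - η_k W_k)` at `ε = 0`. Summation by parts turns
the derivative of the action into `∑_k (DL̂(W_{k-1})(W_{k-1} η_k) - DL̂(W_k)(η_k W_k))` over the
interior nodes, and since the `η_k` are independent this vanishes for all variations iff every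
summand does.
-/

open scoped ContDiff BigOperators

attribute [local instance] Matrix.normedAddCommGroup Matrix.normedSpace

namespace Stmt11

abbrev Mat (n : ℕ) := Matrix (Fin n) (Fin n) ℝ

/-- `Mat n` with the submultiplicative `L∞` operator norm instead of the entrywise sup norm, so
that the derivative of the exponential in a normed algebra applies. -/
def OpMat (n : ℕ) := Matrix (Fin n) (Fin n) ℝ

namespace OpMat

variable {n : ℕ}

noncomputable instance : NormedRing (OpMat n) := Matrix.linftyOpNormedRing
noncomputable instance : NormedAlgebra ℝ (OpMat n) := Matrix.linftyOpNormedAlgebra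
instance : CompleteSpace (OpMat n) := inferInstanceAs (CompleteSpace (Mat n))
instance : FiniteDimensional ℝ (OpMat n) := inferInstanceAs (FiniteDimensional ℝ (Mat n))

noncomputable def toMat : OpMat n ≃L[ℝ] Mat n :=
  (LinearEquiv.refl ℝ (Mat n)).toContinuousLinearEquiv

end OpMat

theorem hasDerivAt_exp_smul_neg_mul_mul_exp_smul {𝕂 𝔸 : Type*} [RCLike 𝕂] [NormedRing 𝔸]
    [NormedAlgebra 𝕂 𝔸] [CompleteSpace 𝔸] (η W ζ : 𝔸) :
    HasDerivAt (fun t : 𝕂 => NormedSpace.exp (t • -η) * W * NormedSpace.exp (t • ζ))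
      (W * ζ - η * W) 0 := by
  have h := ((hasDerivAt_exp_smul_const (-η) (0 : 𝕂)).mul_const W).mul
    (hasDerivAt_exp_smul_const ζ (0 : 𝕂))
  simp only [zero_smul, NormedSpace.exp_zero] at h
  exact h.congr_deriv (by noncomm_ring)

theorem Mat.hasDerivAt_exp_smul_neg_mul_mul_exp_smul {n : ℕ} (η W ζ : Mat n) :
    HasDerivAt (fun t : ℝ => NormedSpace.exp (t • -η) * W * NormedSpace.exp (t • ζ))
      (W * ζ - η * W) 0 :=
  OpMat.toMat.hasFDerivAt.comp_hasDerivAt 0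
    (Stmt11.hasDerivAt_exp_smul_neg_mul_mul_exp_smul (𝔸 := OpMat n) η W ζ)

theorem Mat.isOpen_setOf_isUnit {n : ℕ} : IsOpen {M : Mat n | IsUnit M} := by
  simp_rw [Matrix.isUnit_iff_isUnit_det, isUnit_iff_ne_zero]
  exact isOpen_ne.preimage continuous_id.matrix_det

theorem differentiableAt_apply_one_prod {n : ℕ} {L : Mat n × Mat n → ℝ}
    (hL : DifferentiableOn ℝ L {p | IsUnit p.1 ∧ IsUnit p.2}) {W : Mat n} (hW : IsUnit W) :
    DifferentiableAt ℝ (fun W => L (1, W)) W := by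
  have hopen : IsOpen {p : Mat n × Mat n | IsUnit p.1 ∧ IsUnit p.2} :=
    (Mat.isOpen_setOf_isUnit.preimage continuous_fst).inter
      (Mat.isOpen_setOf_isUnit.preimage continuous_snd)
  exact (hL.differentiableAt (hopen.mem_nhds ⟨isUnit_one, hW⟩)).comp W
    ((differentiableAt_const _).prodMk differentiableAt_id)

theorem apply_eq_apply_one_inv_mul {n : ℕ} {L : Mat n × Mat n → ℝ}
    (hinv : ∀ g a b : Mat n, IsUnit g → IsUnit a → IsUnit b → L (g * a, g * b) = L (a, b))
    {a b : Mat n} (ha : IsUnit a) (hb : IsUnit b) :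
    L (a, b) = L (1, a⁻¹ * b) := by
  rw [← hinv a⁻¹ a b (Matrix.isUnit_nonsing_inv_iff.mpr ha) ha hb,
    Matrix.nonsing_inv_mul a ((Matrix.isUnit_iff_isUnit_det a).mp ha)]

theorem hasDerivAt_apply_mul_exp_smul {n : ℕ} {L : Mat n × Mat n → ℝ}
    (hinv : ∀ g a b : Mat n, IsUnit g → IsUnit a → IsUnit b → L (g * a, g * b) = L (a, b))
    {a b : Mat n} (ha : IsUnit a) (hb : IsUnit b)
    (hL : DifferentiableAt ℝ (fun W => L (1, W)) (a⁻¹ * b)) (η ζ : Mat n) :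
    HasDerivAt (fun t : ℝ => L (a * NormedSpace.exp (t • η), b * NormedSpace.exp (t • ζ)))
      (fderiv ℝ (fun W => L (1, W)) (a⁻¹ * b) (a⁻¹ * b * ζ - η * (a⁻¹ * b))) 0 := by
  have hreduce : (fun t : ℝ => L (a * NormedSpace.exp (t • η), b * NormedSpace.exp (t • ζ)))
      = fun t => L (1, NormedSpace.exp (t • -η) * (a⁻¹ * b) * NormedSpace.exp (t • ζ)) := by
    funext t
    rw [apply_eq_apply_one_inv_mul hinv (ha.mul (Matrix.isUnit_exp _))
      (hb.mul (Matrix.isUnit_exp _)), Matrix.mul_inv_rev, smul_neg, Matrix.exp_neg]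
    simp only [Matrix.mul_assoc]
  rw [hreduce]
  exact hL.hasFDerivAt.comp_hasDerivAt_of_eq 0
    (Mat.hasDerivAt_exp_smul_neg_mul_mul_exp_smul η (a⁻¹ * b) ζ) (by simp)

theorem Finset.sum_range_succ_sub_eq_sum_range_sub_succ {G : Type*} [AddCommGroup G]
    (u v : ℕ → G) (M : ℕ) (hv : v 0 = 0) (hu : u M = 0) :
    ∑ k ∈ Finset.range (M + 1), (u k - v k) = ∑ k ∈ Finset.range M, (u k - v (k + 1)) := by
  rw [Finset.sum_sub_distrib, Finset.sum_range_succ, Finset.sum_range_succ' v, hu, hv,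
    add_zero, add_zero, ← Finset.sum_sub_distrib]

theorem forall_sum_range_apply_succ_eq_zero_iff {E G : Type*} [Zero E] [AddCommMonoid G]
    (φ : ℕ → E → G) (hφ : ∀ k, φ k 0 = 0) (M : ℕ) :
    (∀ η : ℕ → E, η 0 = 0 → η (M + 1) = 0 → ∑ k ∈ Finset.range M, φ k (η (k + 1)) = 0)
      ↔ ∀ k < M, ∀ ξ, φ k ξ = 0 := by
  constructor
  · intro h k hk ξ
    have := h (Pi.single (k + 1) ξ) (by simp) (by simp [Pi.single_apply]; omega)
    rwa [Finset.sum_eq_single_of_mem k (Finset.mem_range.mpr hk)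
      (fun j _ hj => by simp [hj, hφ]), Pi.single_eq_same] at this
  · intro h η _ _
    exact Finset.sum_eq_zero fun k hk => h k (Finset.mem_range.mp hk) _

theorem discrete_euler_poincare_left_invariant_general
    {n N : ℕ}
    (L : Mat n × Mat n → ℝ)
    (hL : ContDiffOn ℝ ∞ L {p : Mat n × Mat n | IsUnit p.1 ∧ IsUnit p.2})
    (hinv : ∀ g a b : Mat n, IsUnit g → IsUnit a → IsUnit b →
      L (g * a, g * b) = L (a, b))
    (g : ℕ → Mat n) (hg : ∀ i, IsUnit (g i)) :
    (∀ η : ℕ → Mat n, η 0 = 0 → η N = 0 →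
        deriv (fun ε : ℝ =>
          ∑ k ∈ Finset.range N,
            L (g k * NormedSpace.exp (ε • η k),
               g (k + 1) * NormedSpace.exp (ε • η (k + 1)))) 0 = 0)
      ↔ ∀ k : ℕ, 1 ≤ k → k ≤ N - 1 → ∀ η : Mat n,
          fderiv ℝ (fun W => L (1, W)) ((g k)⁻¹ * g (k + 1))
              (η * ((g k)⁻¹ * g (k + 1)))
            = fderiv ℝ (fun W => L (1, W)) ((g (k - 1))⁻¹ * g k)
              ((g (k - 1))⁻¹ * g k * η) := by
  rcases N with _ | M
  · simpa using fun k _ hk₀ => absurd hk₀ (by omega)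
  set W : ℕ → Mat n := fun k => (g k)⁻¹ * g (k + 1)
  set D : ℕ → Mat n →L[ℝ] ℝ := fun k => fderiv ℝ (fun W => L (1, W)) (W k)
  have hderiv : ∀ η : ℕ → Mat n, η 0 = 0 → η (M + 1) = 0 →
      deriv (fun ε : ℝ => ∑ k ∈ Finset.range (M + 1),
          L (g k * NormedSpace.exp (ε • η k), g (k + 1) * NormedSpace.exp (ε • η (k + 1)))) 0
        = ∑ k ∈ Finset.range M, (D k (W k * η (k + 1)) - D (k + 1) (η (k + 1) * W (k + 1))) := by
    intro η h₀ hM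
    have hW k : IsUnit (W k) := (Matrix.isUnit_nonsing_inv_iff.mpr (hg k)).mul (hg (k + 1))
    rw [(HasDerivAt.fun_sum fun k _ => hasDerivAt_apply_mul_exp_smul hinv (hg k) (hg (k + 1))
      (differentiableAt_apply_one_prod (hL.differentiableOn (by simp)) (hW k))
      (η k) (η (k + 1))).deriv]
    simp only [map_sub]
    exact Finset.sum_range_succ_sub_eq_sum_range_sub_succ _ _ M (by simp [h₀]) (by simp [hM])
  refine (forall_congr' fun η => forall_congr' fun h₀ => forall_congr' fun hM => ?_).trans
    ((forall_sum_range_apply_succ_eq_zero_iff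
      (fun k ξ => D k (W k * ξ) - D (k + 1) (ξ * W (k + 1))) (fun k => by simp) M).trans ?_)
  · rw [hderiv η h₀ hM]
  simp only [sub_eq_zero]
  constructor
  · intro h k hk₁ hk₂ ξ
    obtain ⟨j, rfl⟩ : ∃ j, k = j + 1 := ⟨k - 1, by omega⟩
    exact (h j (by omega) ξ).symm
  · intro h k hk ξ
    exact (h (k + 1) (by omega) (by omega) ξ).symm

/-- **Discrete Euler–Poincaré equations from a left-invariant discrete
Lagrangian.**  A sequence `g₀, …, g_N` of invertible matrices with fixed
endpoints is a critical point of the discrete action of the left-invariant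
Lagrangian `L_d` if and only if the discrete Euler–Poincaré equations hold for
the reduced Lagrangian `L̂(W) = L_d(1, W)` along `W_k = g_k⁻¹ g_{k+1}`. -/
theorem discrete_euler_poincare_left_invariant
    {n N : ℕ} (hN : 2 ≤ N)
    (L : Mat n × Mat n → ℝ)
    (hL : ContDiffOn ℝ ∞ L {p : Mat n × Mat n | IsUnit p.1 ∧ IsUnit p.2})
    (hinv : ∀ g a b : Mat n, IsUnit g → IsUnit a → IsUnit b →
      L (g * a, g * b) = L (a, b))
    (g : ℕ → Mat n) (hg : ∀ i, IsUnit (g i)) :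
    (∀ η : ℕ → Mat n, η 0 = 0 → η N = 0 →
        deriv (fun ε : ℝ =>
          ∑ k ∈ Finset.range N,
            L (g k * NormedSpace.exp (ε • η k),
               g (k + 1) * NormedSpace.exp (ε • η (k + 1)))) 0 = 0)
      ↔ ∀ k : ℕ, 1 ≤ k → k ≤ N - 1 → ∀ η : Mat n,
          fderiv ℝ (fun W => L (1, W)) ((g k)⁻¹ * g (k + 1))
              (η * ((g k)⁻¹ * g (k + 1)))
            = fderiv ℝ (fun W => L (1, W)) ((g (k - 1))⁻¹ * g k)
              ((g (k - 1))⁻¹ * g k * η) :=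
  discrete_euler_poincare_left_invariant_general L hL hinv g hg

end Stmt11
end

section
/- Let n, N ∈ ℕ with N ≥ 2 and let L̂ be a smooth real-valued function on invertible n×n real matrices. Then for a sequence of invertible matrices W₀, W₁, …, W_{N-1}, the following are equivalent: (a) for all η₀, η₁, …, η_N ∈ Matrix(n,ℝ) with η₀ = η_N = 0, the derivative at ε = 0 of Σ_{k=0}^{N-1} L̂(exp(−ε η_k) · W_k · exp(ε η_{k+1})) vanishes (i.e. (W_k) extremizes the reduced discrete action under the constrained variations δW_k = −η_k W_k + W_k η_{k+1}); (b) the discrete Euler–Poincaré equations hold: for every k = 1, …, N−1 and every η ∈ Matrix(n,ℝ), DL̂(W_k)(η · W_k) = DL̂(W_{k-1})(W_{k-1} · η). -/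
open scoped ContDiff BigOperators

attribute [local instance] Matrix.normedAddCommGroup Matrix.normedSpace

namespace Stmt12

abbrev Mat (n : ℕ) := Matrix (Fin n) (Fin n) ℝ

/-! Differentiating under the finite sum, the `k`-th term of the action contributes
`DL̂(W_k)(-η_k W_k + W_k η_{k+1})`, because `ε ↦ exp(-εA) W exp(εB)` has velocity `-AW + WB` at
`0`. Shifting the index of the `η_{k+1}`-terms (discrete integration by parts, using
`η_0 = η_N = 0`) rewrites the first variation as
`∑_{0<k<N} (DL̂(W_{k-1})(W_{k-1} η_k) - DL̂(W_k)(η_k W_k))`, which vanishes for every `η` iff each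
summand does: test with `η` supported at a single `k`. -/

open Finset NormedSpace

theorem hasDerivAt_exp_neg_smul_mul_mul_exp_smul {𝕂 𝔸 : Type*} [RCLike 𝕂] [NormedRing 𝔸]
    [NormedAlgebra 𝕂 𝔸] [CompleteSpace 𝔸] (A W B : 𝔸) :
    HasDerivAt (fun ε : 𝕂 => exp (-(ε • A)) * W * exp (ε • B)) (-(A * W) + W * B) 0 := by
  have h := ((hasDerivAt_exp_smul_const (-A) (0 : 𝕂)).mul_const W).mul
    (hasDerivAt_exp_smul_const B (0 : 𝕂))
  simp only [zero_smul, exp_zero, one_mul, mul_one, smul_neg] at h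
  convert h using 1
  · rfl
  · simp

/- Derivatives only depend on the topology, which the (submultiplicative) `L∞` operator norm
shares with the entrywise norm. -/
theorem Matrix.hasDerivAt_exp_neg_smul_mul_mul_exp_smul {n : ℕ} (A W B : Mat n) :
    HasDerivAt (fun ε : ℝ => exp (-(ε • A)) * W * exp (ε • B)) (-(A * W) + W * B) 0 :=
  @Stmt12.hasDerivAt_exp_neg_smul_mul_mul_exp_smul ℝ (Mat n) _ Matrix.linftyOpNormedRing
    Matrix.linftyOpNormedAlgebra (FiniteDimensional.complete ℝ _) A W B

theorem Matrix.isOpen_setOf_isUnit {n : ℕ} : IsOpen {W : Mat n | IsUnit W} := by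
  convert Units.isOpen.preimage (continuous_id.matrix_det (n := Fin n) (R := ℝ)) using 1
  exact Set.ext fun W => W.isUnit_iff_isUnit_det

theorem sum_range_sub_eq_sum_Ioo {M G : Type*} [Zero M] [AddCommGroup G] {A B : ℕ → M → G}
    (hA : ∀ k, A k 0 = 0) (hB : ∀ k, B k 0 = 0) {η : ℕ → M} {N : ℕ} (h0 : η 0 = 0)
    (hN : η N = 0) :
    ∑ k ∈ range N, (B k (η (k + 1)) - A k (η k))
      = ∑ k ∈ Ioo 0 N, (B (k - 1) (η k) - A k (η k)) := by
  cases N with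
  | zero => simp
  | succ M =>
    rw [← Ico_add_one_left_eq_Ioo, sum_Ico_eq_sum_range, sum_sub_distrib, sum_sub_distrib,
      sum_range_succ, sum_range_succ' (fun k => A k (η k))]
    simp [hA, hB, h0, hN, add_comm 1]

noncomputable def variedAction {n : ℕ} (L : Mat n → ℝ) (N : ℕ) (W η : ℕ → Mat n) (ε : ℝ) : ℝ :=
  ∑ k ∈ range N, L (exp (-(ε • η k)) * W k * exp (ε • η (k + 1)))

theorem hasDerivAt_variedAction {n N : ℕ} {L : Mat n → ℝ} {W : ℕ → Mat n}
    (hL : ∀ k < N, DifferentiableAt ℝ L (W k)) (η : ℕ → Mat n) :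
    HasDerivAt (variedAction L N W η)
      (∑ k ∈ range N, fderiv ℝ L (W k) (-(η k * W k) + W k * η (k + 1))) 0 :=
  HasDerivAt.fun_sum fun k hk =>
    (hL k (mem_range.mp hk)).hasFDerivAt.comp_hasDerivAt_of_eq 0
      (Matrix.hasDerivAt_exp_neg_smul_mul_mul_exp_smul _ _ _) (by simp)

theorem deriv_variedAction {n N : ℕ} {L : Mat n → ℝ} {W : ℕ → Mat n}
    (hL : ∀ k < N, DifferentiableAt ℝ L (W k)) {η : ℕ → Mat n} (h0 : η 0 = 0) (hN : η N = 0) :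
    deriv (variedAction L N W η) 0
      = ∑ k ∈ Ioo 0 N,
          (fderiv ℝ L (W (k - 1)) (W (k - 1) * η k) - fderiv ℝ L (W k) (η k * W k)) := by
  rw [(hasDerivAt_variedAction hL η).deriv,
    ← sum_range_sub_eq_sum_Ioo (A := fun k x => fderiv ℝ L (W k) (x * W k))
      (B := fun k x => fderiv ℝ L (W k) (W k * x)) (by simp) (by simp) h0 hN]
  simp only [neg_add_eq_sub, map_sub]

theorem discrete_euler_poincare_reduced_general
    {n N : ℕ}
    (L : Mat n → ℝ)
    (hL : ContDiffOn ℝ ∞ L {W : Mat n | IsUnit W})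
    (W : ℕ → Mat n) (hW : ∀ k, IsUnit (W k)) :
    (∀ η : ℕ → Mat n, η 0 = 0 → η N = 0 →
        deriv (fun ε : ℝ =>
          ∑ k ∈ Finset.range N,
            L (NormedSpace.exp (-(ε • η k)) * W k
                * NormedSpace.exp (ε • η (k + 1)))) 0 = 0)
      ↔ ∀ k : ℕ, 1 ≤ k → k ≤ N - 1 → ∀ η : Mat n,
          fderiv ℝ L (W k) (η * W k)
            = fderiv ℝ L (W (k - 1)) (W (k - 1) * η) := by
  change (∀ η, η 0 = 0 → η N = 0 → deriv (variedAction L N W η) 0 = 0) ↔ _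
  have hDL (k : ℕ) (_ : k < N) : DifferentiableAt ℝ L (W k) :=
    (hL.contDiffAt (Matrix.isOpen_setOf_isUnit.mem_nhds (hW k))).differentiableAt (by simp)
  constructor
  · intro hcrit k hk1 hkN x
    let η : ℕ → Mat n := Pi.single k x
    have h0 : η 0 = 0 := by simp [η, Pi.single_apply]; omega
    have hN : η N = 0 := by simp [η, Pi.single_apply]; omega
    have h := hcrit η h0 hN
    rw [deriv_variedAction hDL h0 hN,
      sum_eq_single_of_mem k (by simp; omega) fun j _ hj => by simp [η, hj]] at h
    simp only [η, Pi.single_eq_same] at h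
    exact (sub_eq_zero.mp h).symm
  · intro hEP η h0 hηN
    rw [deriv_variedAction hDL h0 hηN]
    exact sum_eq_zero fun k hk => sub_eq_zero.mpr
      (hEP k (by simp at hk; omega) (by simp at hk; omega) (η k)).symm

/-- **Discrete Euler–Poincaré equations (reduced form).**  A sequence
`W₀, …, W_{N-1}` of invertible matrices extremizes the reduced discrete action
under the constrained variations `δW_k = −η_k W_k + W_k η_{k+1}` (with
`η₀ = η_N = 0`) if and only if the discrete Euler–Poincaré equations hold. -/
theorem discrete_euler_poincare_reduced
    {n N : ℕ} (hN : 2 ≤ N)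
    (L : Mat n → ℝ)
    (hL : ContDiffOn ℝ ∞ L {W : Mat n | IsUnit W})
    (W : ℕ → Mat n) (hW : ∀ k, IsUnit (W k)) :
    (∀ η : ℕ → Mat n, η 0 = 0 → η N = 0 →
        deriv (fun ε : ℝ =>
          ∑ k ∈ Finset.range N,
            L (NormedSpace.exp (-(ε • η k)) * W k
                * NormedSpace.exp (ε • η (k + 1)))) 0 = 0)
      ↔ ∀ k : ℕ, 1 ≤ k → k ≤ N - 1 → ∀ η : Mat n,
          fderiv ℝ L (W k) (η * W k)
            = fderiv ℝ L (W (k - 1)) (W (k - 1) * η) :=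
  discrete_euler_poincare_reduced_general L hL W hW

end Stmt12
end

section
/- Let x be an n×n real matrix such that 1 − x/2 and 1 + x/2 are invertible. Then the Cayley map is Fréchet differentiable at x, and its derivative is given by the right-trivialized tangent: for every n×n real matrix y, D cay(x)(y) = dcay_x(y) · cay(x), where dcay_x(y) := (1 − x/2)⁻¹ · y · (1 + x/2)⁻¹. Moreover, the linear map y ↦ (1 − x/2) · y · (1 + x/2) is a two-sided inverse of the linear map dcay_x on Matrix(n,ℝ). -/
attribute [local instance] Matrix.normedAddCommGroup Matrix.normedSpace

/-- The Cayley map `cay(x) = (1 − x/2)⁻¹ (1 + x/2)` on square matrices. -/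
noncomputable def cay {n : ℕ} (x : Matrix (Fin n) (Fin n) ℝ) :
    Matrix (Fin n) (Fin n) ℝ :=
  (1 - (2⁻¹ : ℝ) • x)⁻¹ * (1 + (2⁻¹ : ℝ) • x)

/-!
Where `1 - x/2` is invertible, `1 + x/2 = 2 - (1 - x/2)` gives `cay x = 2 (1 - x/2)⁻¹ - 1`, so the
derivative of matrix inversion yields `D cay(x) y = (1 - x/2)⁻¹ y (1 - x/2)⁻¹`. As `1 - x/2` and
`1 + x/2` commute, so do their inverses, hence `(1 + x/2)⁻¹ cay x = (1 - x/2)⁻¹`, which is the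
right-trivialized form.
-/

open Ring Topology

theorem map_ringInverse {M N F : Type*} [MonoidWithZero M] [MonoidWithZero N] [EquivLike F M N]
    [MulEquivClass F M N] (f : F) (a : M) : f a⁻¹ʳ = (f a)⁻¹ʳ := by
  by_cases ha : IsUnit a
  · calc f a⁻¹ʳ = (f a)⁻¹ʳ * (f a * f a⁻¹ʳ) :=
          (Ring.inverse_mul_cancel_left _ _ (ha.map f)).symm
      _ = (f a)⁻¹ʳ := by rw [← map_mul, Ring.mul_inverse_cancel a ha, map_one, mul_one]
  · rw [Ring.inverse_non_unit a ha, Ring.inverse_non_unit _ (mt (isUnit_map_iff f a).mp ha),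
      map_zero]

namespace Matrix

theorem isOpen_setOf_isUnit_s14 {K n : Type*} [Field K] [TopologicalSpace K] [IsTopologicalRing K]
    [T2Space K] [Fintype n] [DecidableEq n] : IsOpen {A : Matrix n n K | IsUnit A} := by
  simp only [isUnit_iff_isUnit_det, isUnit_iff_ne_zero]
  exact isOpen_ne_fun continuous_id.matrix_det continuous_const

variable {𝕜 : Type*} [RCLike 𝕜] {n : Type*} [Fintype n] [DecidableEq n]

/-- The entrywise sup norm on matrices is not submultiplicative, so the derivative of inversion is
transported from the Banach algebra of operators on `EuclideanSpace`. -/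
noncomputable def toEuclideanCLE :
    Matrix n n 𝕜 ≃L[𝕜] (EuclideanSpace 𝕜 n →L[𝕜] EuclideanSpace 𝕜 n) :=
  toEuclideanCLM.toAlgEquiv.toLinearEquiv.toContinuousLinearEquiv

theorem toEuclideanCLE_apply (A : Matrix n n 𝕜) :
    toEuclideanCLE A = toEuclideanCLM (n := n) (𝕜 := 𝕜) A :=
  rfl

theorem toEuclideanCLE_mul (A B : Matrix n n 𝕜) :
    toEuclideanCLE (A * B) = toEuclideanCLE A * toEuclideanCLE B := by
  simp only [toEuclideanCLE_apply, map_mul]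

theorem toEuclideanCLE_nonsing_inv (A : Matrix n n 𝕜) :
    toEuclideanCLE A⁻¹ = (toEuclideanCLE A)⁻¹ʳ := by
  rw [toEuclideanCLE_apply, toEuclideanCLE_apply, nonsing_inv_eq_ringInverse, map_ringInverse]

theorem hasFDerivAt_nonsing_inv {A : Matrix n n 𝕜} (hA : IsUnit A) :
    ∃ D : Matrix n n 𝕜 →L[𝕜] Matrix n n 𝕜,
      HasFDerivAt Inv.inv D A ∧ ∀ t, D t = -(A⁻¹ * t * A⁻¹) := by
  set e : Matrix n n 𝕜 ≃L[𝕜] _ := toEuclideanCLE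
  obtain ⟨u, hu⟩ : IsUnit (e A) := by
    simpa only [e, toEuclideanCLE_apply] using hA.map toEuclideanCLM
  have hu_inv : (↑u⁻¹ : EuclideanSpace 𝕜 n →L[𝕜] EuclideanSpace 𝕜 n) = e A⁻¹ := by
    rw [← Ring.inverse_unit, hu, toEuclideanCLE_nonsing_inv]
  have hinv : HasFDerivAt Ring.inverse _ (e A) := hu ▸ hasFDerivAt_ringInverse (𝕜 := 𝕜) u
  have hconj : (Inv.inv : Matrix n n 𝕜 → Matrix n n 𝕜) = e.symm ∘ Ring.inverse ∘ e :=
    funext fun X => e.eq_symm_apply.mpr (toEuclideanCLE_nonsing_inv X)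
  refine ⟨_, hconj ▸ e.symm.hasFDerivAt.comp _ (hinv.comp _ e.hasFDerivAt), fun t => ?_⟩
  change e.symm (-(↑u⁻¹ * e t * ↑u⁻¹)) = _
  rw [hu_inv, ← toEuclideanCLE_mul, ← toEuclideanCLE_mul, ← map_neg, e.symm_apply_apply]

end Matrix

variable {n : ℕ}

theorem cay_eq_of_isUnit {x : Matrix (Fin n) (Fin n) ℝ} (h : IsUnit (1 - (2⁻¹ : ℝ) • x)) :
    cay x = (2 : ℝ) • (1 - (2⁻¹ : ℝ) • x)⁻¹ - 1 := by
  have hsum : 1 + (2⁻¹ : ℝ) • x = (2 : ℝ) • 1 - (1 - (2⁻¹ : ℝ) • x) := by module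
  rw [cay, hsum, Matrix.mul_sub, Matrix.mul_smul, Matrix.mul_one,
    Matrix.nonsing_inv_mul _ ((Matrix.isUnit_iff_isUnit_det _).mp h)]

theorem hasFDerivAt_cay {x : Matrix (Fin n) (Fin n) ℝ} (h : IsUnit (1 - (2⁻¹ : ℝ) • x)) :
    ∃ D : Matrix (Fin n) (Fin n) ℝ →L[ℝ] Matrix (Fin n) (Fin n) ℝ, HasFDerivAt cay D x ∧
      ∀ y, D y = (1 - (2⁻¹ : ℝ) • x)⁻¹ * y * (1 - (2⁻¹ : ℝ) • x)⁻¹ := by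
  obtain ⟨D, hD, hDy⟩ := Matrix.hasFDerivAt_nonsing_inv h
  have hden : HasFDerivAt (fun y : Matrix (Fin n) (Fin n) ℝ => 1 - (2⁻¹ : ℝ) • y)
      (-((2⁻¹ : ℝ) • ContinuousLinearMap.id ℝ _)) x :=
    ((hasFDerivAt_id x).const_smul (2⁻¹ : ℝ)).const_sub 1
  have hcay_near : cay =ᶠ[𝓝 x] fun y => (2 : ℝ) • (1 - (2⁻¹ : ℝ) • y)⁻¹ - 1 := by
    have hcont : Continuous fun y : Matrix (Fin n) (Fin n) ℝ => 1 - (2⁻¹ : ℝ) • y := by fun_prop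
    filter_upwards [(Matrix.isOpen_setOf_isUnit_s14.preimage hcont).mem_nhds h] with y hy
    exact cay_eq_of_isUnit hy
  refine ⟨_, (((hD.comp x hden).const_smul (2 : ℝ)).sub_const 1).congr_of_eventuallyEq
    hcay_near, fun y => ?_⟩
  show (2 : ℝ) • D (-((2⁻¹ : ℝ) • y)) = _
  rw [hDy, Matrix.mul_neg, Matrix.neg_mul, neg_neg, Matrix.mul_smul, Matrix.smul_mul, smul_smul]
  norm_num

/-- **The right-trivialized tangent of the Cayley map.**  At a point `x` with
`1 ± x/2` invertible, `cay` is Fréchet differentiable with derivative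
`y ↦ dcay_x(y) · cay(x)` where `dcay_x(y) = (1 − x/2)⁻¹ y (1 + x/2)⁻¹`;
moreover `y ↦ (1 − x/2) y (1 + x/2)` is a two-sided inverse of `dcay_x`. -/
theorem cayley_fderiv_right_trivialized
    {n : ℕ} (x : Matrix (Fin n) (Fin n) ℝ)
    (h₁ : IsUnit (1 - (2⁻¹ : ℝ) • x)) (h₂ : IsUnit (1 + (2⁻¹ : ℝ) • x)) :
    (∃ D : Matrix (Fin n) (Fin n) ℝ →L[ℝ] Matrix (Fin n) (Fin n) ℝ,
      HasFDerivAt cay D x ∧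
      ∀ y, D y = ((1 - (2⁻¹ : ℝ) • x)⁻¹ * y * (1 + (2⁻¹ : ℝ) • x)⁻¹) * cay x)
    ∧ (∀ y : Matrix (Fin n) (Fin n) ℝ,
        (1 - (2⁻¹ : ℝ) • x)
            * ((1 - (2⁻¹ : ℝ) • x)⁻¹ * y * (1 + (2⁻¹ : ℝ) • x)⁻¹)
            * (1 + (2⁻¹ : ℝ) • x) = y
        ∧ (1 - (2⁻¹ : ℝ) • x)⁻¹
            * ((1 - (2⁻¹ : ℝ) • x) * y * (1 + (2⁻¹ : ℝ) • x))
            * (1 + (2⁻¹ : ℝ) • x)⁻¹ = y) := by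
  obtain ⟨D, hD, hDy⟩ := hasFDerivAt_cay h₁
  set A := 1 - (2⁻¹ : ℝ) • x
  set B := 1 + (2⁻¹ : ℝ) • x
  have hA : IsUnit A.det := (Matrix.isUnit_iff_isUnit_det A).mp h₁
  have hB : IsUnit B.det := (Matrix.isUnit_iff_isUnit_det B).mp h₂
  have hAB : Commute A B :=
    (Commute.one_left B).sub_left ((Commute.one_right _).add_right (.refl _))
  have hAB_inv : Commute A⁻¹ B⁻¹ := by
    simpa only [Matrix.nonsing_inv_eq_ringInverse] using hAB.ringInverse_ringInverse
  refine ⟨⟨D, hD, fun y => ?_⟩, fun y => ⟨?_, ?_⟩⟩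
  · calc D y = A⁻¹ * y * (A⁻¹ * B⁻¹ * B) := by
          rw [hDy, mul_assoc A⁻¹ B⁻¹, Matrix.nonsing_inv_mul B hB, mul_one]
      _ = A⁻¹ * y * B⁻¹ * (A⁻¹ * B) := by rw [hAB_inv.eq]; simp only [mul_assoc]
  · simp [mul_assoc, Matrix.mul_nonsing_inv_cancel_left A y hA, Matrix.nonsing_inv_mul B hB]
  · simp [mul_assoc, Matrix.nonsing_inv_mul_cancel_left A y hA, Matrix.mul_nonsing_inv B hB]
end

section
/- For all ω, y ∈ ℝ³, the matrices 1 − ω̂/2 and 1 + ω̂/2 are invertible and (1 − ω̂/2)⁻¹ · ŷ · (1 + ω̂/2)⁻¹ = hat((2/(4 + ‖ω‖²)) · (2 I₃ + ω̂) y); that is, the right-trivialized tangent of the Cayley map on so(3) is represented in vector form by the 3×3 matrix dcay_ω = (2/(4 + ‖ω‖²)) (2 I₃ + ω̂). -/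
open Matrix

/-- The `so(3)` hat map: `ω̂ v = ω × v`. -/
def hat (ω : Fin 3 → ℝ) : Matrix (Fin 3) (Fin 3) ℝ :=
  !![0, -ω 2, ω 1; ω 2, 0, -ω 0; -ω 1, ω 0, 0]

lemma hat_smul (a : ℝ) (v : Fin 3 → ℝ) : hat (a • v) = a • hat v := by
  ext i j
  fin_cases i <;> fin_cases j <;> simp [hat]

set_option maxHeartbeats 1000000 in
/-- **Vector form of the right-trivialized tangent of the Cayley map on
`so(3)`:** the matrices `1 ± ω̂/2` are invertible and
`(1 − ω̂/2)⁻¹ ŷ (1 + ω̂/2)⁻¹ = hat((2/(4 + ‖ω‖²)) (2I₃ + ω̂) y)`. -/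
theorem cayley_so3_dcay_vector_form (ω y : Fin 3 → ℝ) :
    IsUnit (1 - (2⁻¹ : ℝ) • hat ω) ∧ IsUnit (1 + (2⁻¹ : ℝ) • hat ω)
    ∧ (1 - (2⁻¹ : ℝ) • hat ω)⁻¹ * hat y * (1 + (2⁻¹ : ℝ) • hat ω)⁻¹
      = hat (((2 / (4 + (ω 0 ^ 2 + ω 1 ^ 2 + ω 2 ^ 2)))
          • ((2 : ℝ) • (1 : Matrix (Fin 3) (Fin 3) ℝ) + hat ω)) *ᵥ y) := by
  set A := 1 - (2⁻¹ : ℝ) • hat ω with hAdef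
  set B := 1 + (2⁻¹ : ℝ) • hat ω with hBdef
  set s := 4 + (ω 0 ^ 2 + ω 1 ^ 2 + ω 2 ^ 2) with hsdef
  have hpos : (0 : ℝ) < s := by positivity
  have hne : s ≠ 0 := ne_of_gt hpos
  have hdetA : A.det = 1 + (ω 0 ^ 2 + ω 1 ^ 2 + ω 2 ^ 2) / 4 := by
    simp [hAdef, hat, Matrix.det_fin_three, Matrix.one_apply]
    ring
  have hdetB : B.det = 1 + (ω 0 ^ 2 + ω 1 ^ 2 + ω 2 ^ 2) / 4 := by
    simp [hBdef, hat, Matrix.det_fin_three, Matrix.one_apply]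
    ring
  have hAi : IsUnit A.det := by
    rw [hdetA, isUnit_iff_ne_zero]; positivity
  have hBi : IsUnit B.det := by
    rw [hdetB, isUnit_iff_ne_zero]; positivity
  have hA : IsUnit A := (Matrix.isUnit_iff_isUnit_det A).mpr hAi
  have hB : IsUnit B := (Matrix.isUnit_iff_isUnit_det B).mpr hBi
  refine ⟨hA, hB, ?_⟩
  set D : Fin 3 → ℝ :=
    ![4 * y 0 + 2 * (ω 1 * y 2 - ω 2 * y 1),
      4 * y 1 + 2 * (ω 2 * y 0 - ω 0 * y 2),
      4 * y 2 + 2 * (ω 0 * y 1 - ω 1 * y 0)] with hDdef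
  have hC : ((2 / s) • ((2 : ℝ) • (1 : Matrix (Fin 3) (Fin 3) ℝ) + hat ω)) *ᵥ y
      = s⁻¹ • D := by
    funext i
    fin_cases i <;>
      · simp [hDdef, hsdef, hat, Matrix.mulVec, dotProduct, Fin.sum_univ_three,
          Matrix.one_apply, Matrix.smul_apply, Pi.smul_apply]
        field_simp
        ring
  have key : A * hat D * B = s • hat y := by
    ext i j
    fin_cases i <;> fin_cases j <;>
      · simp [hAdef, hBdef, hDdef, hsdef, hat, Matrix.mul_apply, Fin.sum_univ_three,
          Matrix.one_apply, Matrix.smul_apply, Pi.smul_apply]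
        ring
  have haty : hat y = s⁻¹ • (A * hat D * B) := by
    rw [key, smul_smul, inv_mul_cancel₀ hne, one_smul]
  rw [hC, hat_smul, haty]
  calc A⁻¹ * (s⁻¹ • (A * hat D * B)) * B⁻¹
      = s⁻¹ • ((A⁻¹ * A) * hat D * (B * B⁻¹)) := by
        rw [Matrix.mul_smul, Matrix.smul_mul]
        congr 1
        noncomm_ring
    _ = s⁻¹ • hat D := by
        rw [Matrix.nonsing_inv_mul A hAi, Matrix.mul_nonsing_inv B hBi, one_mul, mul_one]
end
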